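/- arXiv:1907.03301 — 4 statements merged into one kernel-verified Lean document; each statement's English description precedes it below -/
import Mathlib

section
/- Let L and L' be broken paracycles and let f: L → L' be a continuous map that is ℝ-equivariant, i.e., f(t·x) = t·f(x) for all t ∈ ℝ and x ∈ L. Then f is weakly order-preserving: x ≤ y in L implies f(x) ≤ f(y) in L'. -/
open Topology

noncomputable section

/-! ### Broken paracycles -/

/-- Data of a `ℤ × ℝ`-action and an order on a space. -/
structure ParaData (L : Type*) where
  act : ℤ × ℝ → L → L
  le : L → L → Prop

namespace ParaData

/-- The set of `ℝ`-fixed points. -/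
def rFixed {L : Type*} (D : ParaData L) : Set L := {x | ∀ t : ℝ, D.act (0, t) x = x}

/-- Definition of a broken paracycle. -/
structure IsBrokenParacycle {L : Type*} [TopologicalSpace L] (D : ParaData L) : Prop where
  act_zero : ∀ x, D.act 0 x = x
  act_add : ∀ g h x, D.act (g + h) x = D.act g (D.act h x)
  act_cont : Continuous fun p : (ℤ × ℝ) × L => D.act p.1 p.2
  exists_homeo : ∃ φ : L ≃ₜ ℝ, ∀ x y, D.le x y ↔ φ x ≤ φ y
  z_free : ∀ (n : ℤ) (x : L), D.act (n, 0) x = x → n = 0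
  r_directed : ∀ t : ℝ, 0 ≤ t → ∀ x, D.le x (D.act (0, t) x)
  z_directed : ∀ x, D.le x (D.act (1, 0) x)
  fixed_discrete : DiscreteTopology D.rFixed
  fixed_nonempty : D.rFixed.Nonempty

open Classical in
/-- The translation distance on a broken paracycle, valued in `[-∞,∞]`. -/
noncomputable def dist {L : Type*} (D : ParaData L) (x y : L) : EReal :=
  if h : ∃ t : ℝ, D.act (0, t) x = y then ((h.choose : ℝ) : EReal)
  else if D.le x y then ⊤ else ⊥

end ParaData

/-!
Conjugating by the order-homeomorphisms `L ≃ₜ ℝ`, `L' ≃ₜ ℝ` turns the two `ℝ`-actions into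
flows `ϕ`, `ψ` on `ℝ` that move every point upwards, and `f` into a continuous map `F : ℝ → ℝ`
intertwining them. A continuous map of `ℝ` is monotone as soon as `F y ≤ F x` for all `y`
slightly to the left of each `x` (continuous induction). At a point `x` that is not fixed, the
points just left of `x` are `ϕ s x` with `s ≤ 0` by the intermediate value theorem on the orbit,
and `F x = ψ (-s) (F (ϕ s x)) ≥ F (ϕ s x)`. At a fixed point `x`, discreteness of the fixed set
gives an interval `(l, x)` without fixed points, and the same local-to-global principle applied
on `[y, x]` for `y ∈ (l, x)` gives `F y ≤ F x`.
-/

open Set Filter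

section ContinuousInduction

variable {α β : Type*} [ConditionallyCompleteLinearOrder α] [TopologicalSpace α] [OrderTopology α]
  [DenselyOrdered α] [LinearOrder β] [TopologicalSpace β] [OrderClosedTopology β] {f : α → β}

theorem le_of_forall_eventually_nhdsLT {a b : α} (hab : a ≤ b) (hf : ContinuousOn f (Icc a b))
    (h : ∀ x ∈ Ioo a b, ∀ᶠ y in 𝓝[<] x, f y ≤ f x) : f a ≤ f b := by
  rcases hab.eq_or_lt with rfl | hab
  · rfl
  have below : ∀ c ∈ Ioo a b, Icc a c ⊆ {x | f x ≤ f c} := by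
    intro c hc
    refine IsClosed.Icc_subset_of_forall_exists_lt ?_ le_rfl ?_
    · rw [inter_comm]
      exact (hf.mono (Icc_subset_Icc_right hc.2.le)).preimage_isClosed_of_isClosed isClosed_Icc
        isClosed_Iic
    · rintro x ⟨hxc, hx⟩ y hy
      have : NeBot (𝓝[<] x) := nhdsLT_neBot_of_exists_lt ⟨y, hy⟩
      obtain ⟨z, hzx, hz⟩ := ((h x ⟨hx.1, hx.2.trans_lt hc.2⟩).and (Ico_mem_nhdsLT hy)).exists
      exact ⟨z, hzx.trans hxc, hz⟩
  have : NeBot (𝓝[<] b) := nhdsLT_neBot_of_exists_lt ⟨a, hab⟩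
  have hlim : Tendsto f (𝓝[<] b) (𝓝 (f b)) := by
    rw [← nhdsWithin_Ioo_eq_nhdsLT hab]
    exact (hf b (right_mem_Icc.2 hab.le)).mono Ioo_subset_Icc_self
  exact ge_of_tendsto hlim <| mem_of_superset (Ioo_mem_nhdsLT hab) fun c hc =>
    below c hc (left_mem_Icc.2 hc.1.le)

theorem monotone_of_forall_eventually_nhdsLT (hf : Continuous f)
    (h : ∀ x, ∀ᶠ y in 𝓝[<] x, f y ≤ f x) : Monotone f :=
  fun _ _ hab => le_of_forall_eventually_nhdsLT hab hf.continuousOn fun x _ => h x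

end ContinuousInduction

namespace Flow

section Conj

variable {τ α β : Type*} [TopologicalSpace τ] [AddZero τ] [TopologicalSpace α] [TopologicalSpace β]

def fixedPoints (ϕ : Flow τ α) : Set α := {x | ∀ t, ϕ t x = x}

def conj (ϕ : Flow τ α) (e : α ≃ₜ β) : Flow τ β where
  toFun t y := e (ϕ t (e.symm y))
  cont' := by fun_prop
  map_add' t₁ t₂ y := by simp [map_add]
  map_zero' y := by simp

@[simp]
theorem conj_apply (ϕ : Flow τ α) (e : α ≃ₜ β) (t : τ) (y : β) :
    ϕ.conj e t y = e (ϕ t (e.symm y)) := rfl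

theorem fixedPoints_conj (ϕ : Flow τ α) (e : α ≃ₜ β) :
    (ϕ.conj e).fixedPoints = e '' ϕ.fixedPoints := by
  ext y
  simp [fixedPoints, e.image_eq_preimage_symm, e.eq_symm_apply]

end Conj

section Monotone

variable {α β : Type*} [TopologicalSpace α] {ϕ : Flow ℝ α} {ψ : ℝ → β → β} {F : α → β}

theorem flow_le_of_nonpos [Preorder α] (hϕ : ∀ t, 0 ≤ t → ∀ x, x ≤ ϕ t x) {t : ℝ} (ht : t ≤ 0)
    (x : α) : ϕ t x ≤ x := by
  simpa [← map_add] using hϕ (-t) (neg_nonneg.2 ht) (ϕ t x)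

theorem exists_flow_lt_of_notMem_fixedPoints [PartialOrder α]
    (hϕ : ∀ t, 0 ≤ t → ∀ x, x ≤ ϕ t x) {x : α} (hx : x ∉ ϕ.fixedPoints) :
    ∃ t ≤ 0, ϕ t x < x := by
  obtain ⟨t, ht⟩ : ∃ t, ϕ t x ≠ x := by simpa [fixedPoints] using hx
  rcases le_or_gt t 0 with htn | htp
  · exact ⟨t, htn, (flow_le_of_nonpos hϕ htn x).lt_of_ne ht⟩
  · refine ⟨-t, by linarith, (flow_le_of_nonpos hϕ (by linarith) x).lt_of_ne fun h => ht ?_⟩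
    rw [← h, ← map_add, add_neg_cancel, map_zero_apply, h]

theorem map_le_map_flow [Preorder β] (hψ : ∀ t, 0 ≤ t → ∀ y, y ≤ ψ t y)
    (hF : ∀ t, Function.Semiconj F (ϕ t) (ψ t)) {t : ℝ} (ht : 0 ≤ t) (x : α) :
    F x ≤ F (ϕ t x) :=
  (hF t x).symm ▸ hψ t ht (F x)

theorem eventually_map_le_of_notMem_fixedPoints [LinearOrder α] [OrderClosedTopology α]
    [Preorder β] (hϕ : ∀ t, 0 ≤ t → ∀ x, x ≤ ϕ t x)
    (hψ : ∀ t, 0 ≤ t → ∀ y, y ≤ ψ t y) (hF : ∀ t, Function.Semiconj F (ϕ t) (ψ t)) {x : α}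
    (hx : x ∉ ϕ.fixedPoints) : ∀ᶠ y in 𝓝[<] x, F y ≤ F x := by
  obtain ⟨T, hT, hTx⟩ := exists_flow_lt_of_notMem_fixedPoints hϕ hx
  filter_upwards [Ioo_mem_nhdsLT hTx] with y hy
  obtain ⟨s, hs, rfl⟩ : y ∈ (ϕ · x) '' Icc T 0 :=
    intermediate_value_Icc hT (ϕ.continuous continuous_id continuous_const).continuousOn
      (by simpa using Ioo_subset_Icc_self hy)
  calc F (ϕ s x) ≤ F (ϕ (-s) (ϕ s x)) := map_le_map_flow hψ hF (neg_nonneg.2 hs.2) _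
    _ = F x := by rw [← map_add, neg_add_cancel, map_zero_apply]

variable [ConditionallyCompleteLinearOrder α] [OrderTopology α] [DenselyOrdered α] [NoMinOrder α]
  [LinearOrder β] [TopologicalSpace β] [OrderClosedTopology β]

theorem eventually_map_le_of_mem_fixedPoints (hϕ : ∀ t, 0 ≤ t → ∀ x, x ≤ ϕ t x)
    (hψ : ∀ t, 0 ≤ t → ∀ y, y ≤ ψ t y) (hdisc : IsDiscrete ϕ.fixedPoints) (hFc : Continuous F)
    (hF : ∀ t, Function.Semiconj F (ϕ t) (ψ t)) {x : α} (hx : x ∈ ϕ.fixedPoints) :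
    ∀ᶠ y in 𝓝[<] x, F y ≤ F x := by
  have hfree : ϕ.fixedPointsᶜ ∈ 𝓝[<] x :=
    nhdsWithin_mono x (fun y hy => ne_of_lt hy)
      (inf_principal_eq_bot.1 (isDiscrete_iff_nhdsNE.1 hdisc x hx))
  obtain ⟨l, hl, hsub⟩ := mem_nhdsLT_iff_exists_Ioo_subset.1 hfree
  filter_upwards [Ioo_mem_nhdsLT hl] with y hy
  exact le_of_forall_eventually_nhdsLT hy.2.le hFc.continuousOn fun z hz =>
    eventually_map_le_of_notMem_fixedPoints hϕ hψ hF (hsub ⟨hy.1.trans hz.1, hz.2⟩)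

theorem monotone_of_semiconj (hϕ : ∀ t, 0 ≤ t → ∀ x, x ≤ ϕ t x)
    (hψ : ∀ t, 0 ≤ t → ∀ y, y ≤ ψ t y) (hdisc : IsDiscrete ϕ.fixedPoints) (hFc : Continuous F)
    (hF : ∀ t, Function.Semiconj F (ϕ t) (ψ t)) : Monotone F :=
  monotone_of_forall_eventually_nhdsLT hFc fun x => by
    by_cases hx : x ∈ ϕ.fixedPoints
    · exact eventually_map_le_of_mem_fixedPoints hϕ hψ hdisc hFc hF hx
    · exact eventually_map_le_of_notMem_fixedPoints hϕ hψ hF hx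

end Monotone

end Flow

namespace ParaData.IsBrokenParacycle

variable {L : Type*} [TopologicalSpace L] {D : ParaData L}

def rFlow (hD : D.IsBrokenParacycle) : Flow ℝ L where
  toFun t x := D.act (0, t) x
  cont' := hD.act_cont.comp (by fun_prop : Continuous fun p : ℝ × L => (((0 : ℤ), p.1), p.2))
  map_add' t u x := by rw [← hD.act_add, Prod.mk_add_mk, add_zero]
  map_zero' x := by rw [Prod.mk_zero_zero, hD.act_zero]

@[simp]
theorem rFlow_apply (hD : D.IsBrokenParacycle) (t : ℝ) (x : L) : hD.rFlow t x = D.act (0, t) x :=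
  rfl

theorem le_conj_rFlow (hD : D.IsBrokenParacycle) {φ : L ≃ₜ ℝ}
    (hφ : ∀ x y, D.le x y ↔ φ x ≤ φ y) (t : ℝ) (ht : 0 ≤ t) (s : ℝ) :
    s ≤ hD.rFlow.conj φ t s := by
  simpa using (hφ _ _).1 (hD.r_directed t ht (φ.symm s))

theorem isDiscrete_fixedPoints_conj_rFlow (hD : D.IsBrokenParacycle) (φ : L ≃ₜ ℝ) :
    IsDiscrete (hD.rFlow.conj φ).fixedPoints := by
  rw [Flow.fixedPoints_conj]
  exact (isDiscrete_iff_discreteTopology.2 hD.fixed_discrete).image φ.isInducing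

end ParaData.IsBrokenParacycle

/-- A continuous `ℝ`-equivariant map of broken paracycles is weakly
order-preserving. -/
theorem rEquivariant_weakly_order_preserving {L L' : Type*}
    [TopologicalSpace L] [TopologicalSpace L']
    (D : ParaData L) (D' : ParaData L')
    (hD : D.IsBrokenParacycle) (hD' : D'.IsBrokenParacycle)
    (f : L → L') (hf : Continuous f)
    (heq : ∀ (t : ℝ) (x : L), f (D.act (0, t) x) = D'.act (0, t) (f x)) :
    ∀ x y : L, D.le x y → D'.le (f x) (f y) := by
  obtain ⟨φ, hφ⟩ := hD.exists_homeo
  obtain ⟨ψ, hψ⟩ := hD'.exists_homeo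
  have hsemiconj : ∀ t, Function.Semiconj (ψ ∘ f ∘ φ.symm) (hD.rFlow.conj φ t)
      (hD'.rFlow.conj ψ t) := fun t s => by simp [heq]
  have hmono : Monotone (ψ ∘ f ∘ φ.symm) :=
    Flow.monotone_of_semiconj (hD.le_conj_rFlow hφ) (hD'.le_conj_rFlow hψ)
      (hD.isDiscrete_fixedPoints_conj_rFlow φ) (by fun_prop) hsemiconj
  intro x y hxy
  simpa [hψ] using hmono ((hφ x y).1 hxy)

end
end

section
/- Let π: L_S → S be a continuous map equipped with a continuous fiber-preserving ℤ × ℝ-action and a linear order on each fiber, satisfying properties (Q1) and (Q4). Then the fiberwise translation distance d: {(x,y) ∈ L_S ×_S L_S : x and y are not a pair of equal ℝ-fixed points} → [-∞,∞], defined by d(x,y) = d_{L_{π(x)}}(x,y), is continuous, where the domain carries the subspace topology from L_S × L_S and [-∞,∞] carries its order topology. -/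
open Topology

noncomputable section

/-! ### Combinatorial index data: parasimplices and paracyclic preorders -/

/-- A set with a "preorder" relation and a `ℤ`-action. -/
structure IdxData (I : Type*) where
  le : I → I → Prop
  shift : ℤ → I → I

namespace IdxData

variable {I : Type*}

/-- `D` is a parasimplex. -/
structure IsParasimplex (D : IdxData I) : Prop where
  le_refl : ∀ i, D.le i i
  le_trans : ∀ i j k, D.le i j → D.le j k → D.le i k
  le_antisymm : ∀ i j, D.le i j → D.le j i → i = j
  le_total : ∀ i j, D.le i j ∨ D.le j i
  shift_zero : ∀ i, D.shift 0 i = i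
  shift_add : ∀ m n i, D.shift (m + n) i = D.shift m (D.shift n i)
  shift_mono : ∀ n i j, D.le i j → D.le (D.shift n i) (D.shift n j)
  le_shift_one : ∀ i, D.le i (D.shift 1 i)
  shift_one_ne : ∀ i, D.shift 1 i ≠ i
  between_finite : ∀ i j, D.le i j → {k | D.le i k ∧ D.le k j}.Finite

/-- `D` is a paracyclic preorder. -/
structure IsParacyclicPreorder (D : IdxData I) : Prop where
  countable : Countable I
  le_refl : ∀ i, D.le i i
  le_trans : ∀ i j k, D.le i j → D.le j k → D.le i k
  le_total : ∀ i j, D.le i j ∨ D.le j i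
  shift_zero : ∀ i, D.shift 0 i = i
  shift_add : ∀ m n i, D.shift (m + n) i = D.shift m (D.shift n i)
  shift_free : ∀ n i, D.shift n i = i → n = 0
  shift_mono_one : ∀ i j, D.le i j → D.le (D.shift 1 i) (D.shift 1 j)
  le_shift_one : ∀ i, D.le i (D.shift 1 i)
  not_shift_one_le : ∀ i, ¬ D.le (D.shift 1 i) i
  between_classes_finite : ∀ i j, D.le i j →
    ((Quot.mk fun a b => D.le a b ∧ D.le b a) '' {k | D.le i k ∧ D.le k j}).Finite

/-- The dual `𝔻 I`: weakly order-preserving surjections onto `{0 < 1}`. -/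
def DType (D : IdxData I) : Type _ :=
  {e : I → Fin 2 // (∀ i j, D.le i j → e i ≤ e j) ∧ Function.Surjective e}

/-- The order and `ℤ`-action on `𝔻 I`. -/
def DData (D : IdxData I) (hD : D.IsParasimplex) : IdxData (D.DType) where
  le e e' := ∀ i, e.1 i ≤ e'.1 i
  shift n e :=
    ⟨fun i => e.1 (D.shift (-n) i),
     fun i j hij => e.2.1 _ _ (hD.shift_mono _ _ _ hij),
     fun b => by
      obtain ⟨i, hi⟩ := e.2.2 b
      refine ⟨D.shift n i, ?_⟩
      show e.1 (D.shift (-n) (D.shift n i)) = b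
      rw [← hD.shift_add, neg_add_cancel, hD.shift_zero, hi]⟩

end IdxData

/-! ### Families of broken paracycles -/

/-- A continuous map `π : E → S` equipped with a continuous fiber-preserving
`ℤ × ℝ`-action and a linear order on each fiber. -/
structure PreFamily (S E : Type*) [TopologicalSpace S] [TopologicalSpace E] where
  π : E → S
  act : ℤ × ℝ → E → E
  fle : E → E → Prop
  π_cont : Continuous π
  act_zero : ∀ x, act 0 x = x
  act_add : ∀ g h x, act (g + h) x = act g (act h x)
  act_cont : Continuous fun p : (ℤ × ℝ) × E => act p.1 p.2
  act_fiber : ∀ g x, π (act g x) = π x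
  fle_fiber : ∀ x y, fle x y → π x = π y
  fle_refl : ∀ x, fle x x
  fle_trans : ∀ x y z, fle x y → fle y z → fle x z
  fle_antisymm : ∀ x y, fle x y → fle y x → x = y
  fle_total : ∀ x y, π x = π y → fle x y ∨ fle y x

namespace PreFamily

variable {S E : Type*} [TopologicalSpace S] [TopologicalSpace E]

/-- The fiber over `s`, with its induced `ℤ × ℝ`-action and order. -/
def fiberData (F : PreFamily S E) (s : S) : ParaData {x : E // F.π x = s} where
  act g x := ⟨F.act g x.1, by rw [F.act_fiber]; exact x.2⟩
  le x y := F.fle x.1 y.1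

/-- The `ℝ`-fixed locus of the total space. -/
def rFixed (F : PreFamily S E) : Set E := {x | ∀ t : ℝ, F.act (0, t) x = x}

/-- (Q1): each fiber is a broken paracycle. -/
def Q1 (F : PreFamily S E) : Prop := ∀ s : S, (F.fiberData s).IsBrokenParacycle

/-- The relation "lying in the same `ℤ`-orbit". -/
def zrel (F : PreFamily S E) (x y : E) : Prop := ∃ n : ℤ, F.act (n, 0) x = y

/-- The quotient of the total space by the `ℤ`-action. -/
def ZQuot (F : PreFamily S E) : Type _ := Quot F.zrel

instance (F : PreFamily S E) : TopologicalSpace F.ZQuot :=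
  inferInstanceAs (TopologicalSpace (Quot F.zrel))

/-- The projection `L_S/ℤ → S`. -/
def qπ (F : PreFamily S E) : F.ZQuot → S :=
  Quot.lift F.π (by rintro x y ⟨n, rfl⟩; rw [F.act_fiber])

/-- The induced `ℝ`-action on `L_S/ℤ`. -/
def qract (F : PreFamily S E) (t : ℝ) : F.ZQuot → F.ZQuot :=
  Quot.map (F.act (0, t)) (by
    rintro x y ⟨n, rfl⟩
    exact ⟨n, by rw [← F.act_add, ← F.act_add]; ring_nf⟩)

/-- The `ℝ`-fixed locus of `L_S/ℤ`. -/
def qrFixed (F : PreFamily S E) : Set F.ZQuot := {q | ∀ t : ℝ, F.qract t q = q}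

/-- (Q2): the `ℝ`-fixed locus is unramified modulo `ℤ`. -/
def Q2 (F : PreFamily S E) : Prop :=
  ∀ s : S, ∃ U : Set S, IsOpen U ∧ s ∈ U ∧
    ∃ (m : ℕ) (K : Fin m → Set F.ZQuot),
      ({q | q ∈ F.qrFixed ∧ F.qπ q ∈ U} = ⋃ a, K a) ∧
      (∀ a b, a ≠ b → Disjoint (K a) (K b)) ∧
      (∀ a, IsClosed (Subtype.val ⁻¹' (K a) : Set (F.qπ ⁻¹' U))) ∧
      (∀ a, ∃ f : (K a) → (U : Set S),
        (∀ q, (f q : S) = F.qπ q.1) ∧ IsClosedEmbedding f)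

/-- (Q3): the projection `L_S/ℤ → S` is a closed map. -/
def Q3 (F : PreFamily S E) : Prop := IsClosedMap F.qπ

/-- The fiber product `L_S ×_S L_S`. -/
def fibProd (F : PreFamily S E) : Set (E × E) := {p | F.π p.1 = F.π p.2}

/-- (Q4): the fiberwise order relation is closed in the fiber product. -/
def Q4 (F : PreFamily S E) : Prop :=
  IsClosed {p : F.fibProd | F.fle p.1.1 p.1.2}

/-- (Q5): local lifting away from the fixed locus. -/
def Q5 (F : PreFamily S E) : Prop :=
  ∀ x : E, x ∉ F.rFixed →
    ∃ U : Set S, IsOpen U ∧ F.π x ∈ U ∧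
      ∃ σ : U → E, Continuous σ ∧ (∀ u, F.π (σ u) = (u : S)) ∧
        (∀ u, σ u ∉ F.rFixed) ∧ (∀ u : U, (u : S) = F.π x → σ u = x)

/-- A family of broken paracycles is a datum satisfying (Q1)–(Q5). -/
def IsFamily (F : PreFamily S E) : Prop := F.Q1 ∧ F.Q2 ∧ F.Q3 ∧ F.Q4 ∧ F.Q5

open Classical in
/-- The fiberwise translation distance. -/
noncomputable def fdist (F : PreFamily S E) (x y : E) : EReal :=
  if h : ∃ t : ℝ, F.act (0, t) x = y then ((h.choose : ℝ) : EReal)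
  else if F.fle x y then ⊤ else ⊥

/-- The restriction of a family to a subset of the base. -/
def restrict (F : PreFamily S E) (U : Set S) : PreFamily U (F.π ⁻¹' U) where
  π x := ⟨F.π x.1, x.2⟩
  act g x := ⟨F.act g x.1, by simp only [Set.mem_preimage, F.act_fiber]; exact x.2⟩
  fle x y := F.fle x.1 y.1
  π_cont := Continuous.subtype_mk (F.π_cont.comp continuous_subtype_val) _
  act_zero x := by simp [F.act_zero]
  act_add g h x := by simp [F.act_add]
  act_cont := by
    apply Continuous.subtype_mk
    exact F.act_cont.comp (continuous_fst.prodMk (continuous_subtype_val.comp continuous_snd))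
  act_fiber g x := by simp [F.act_fiber]
  fle_fiber x y h := by
    apply Subtype.ext; exact F.fle_fiber _ _ h
  fle_refl x := F.fle_refl x.1
  fle_trans x y z := F.fle_trans x.1 y.1 z.1
  fle_antisymm x y h h' := Subtype.ext (F.fle_antisymm _ _ h h')
  fle_total x y h := F.fle_total x.1 y.1 (congrArg Subtype.val h)

/-- An `I`-section of a family of broken paracycles. -/
structure IsISection {I : Type*} (F : PreFamily S E) (D : IdxData I) (σ : S × I → E) : Prop where
  cont : ∀ i, Continuous fun s => σ (s, i)
  sect : ∀ s i, F.π (σ (s, i)) = s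
  not_fixed : ∀ s i, σ (s, i) ∉ F.rFixed
  surj : ∀ (s : S) (x : E), F.π x = s → x ∉ F.rFixed →
    ∃ (i : I) (t : ℝ), F.act (0, t) (σ (s, i)) = x
  directed : ∀ s i i', D.le i i' → ∃ t : ℝ, F.fle (F.act (0, t) (σ (s, i))) (σ (s, i'))
  equivariant : ∀ s i, σ (s, D.shift 1 i) = F.act (1, 0) (σ (s, i))

end PreFamily

/-! ### Auxiliary lemmas for the continuity of the translation distance -/

namespace PreFamily

variable {S E : Type*} [TopologicalSpace S] [TopologicalSpace E] (F : PreFamily S E)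

lemma act_r_add (t s : ℝ) (x : E) :
    F.act (0, t + s) x = F.act (0, t) (F.act (0, s) x) := by
  have h : ((0, t) + (0, s) : ℤ × ℝ) = (0, t + s) := by simp
  rw [← h, F.act_add]

lemma act_r_zero (x : E) : F.act ((0 : ℤ), (0 : ℝ)) x = x := F.act_zero x

variable (h1 : F.Q1)
include h1

lemma fle_act_self {t : ℝ} (ht : 0 ≤ t) (x : E) : F.fle x (F.act (0, t) x) :=
  (h1 (F.π x)).r_directed t ht ⟨x, rfl⟩

lemma fle_act_mono {t s : ℝ} (h : t ≤ s) (x : E) :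
    F.fle (F.act (0, t) x) (F.act (0, s) x) := by
  have h2 := F.fle_act_self h1 (sub_nonneg.2 h) (F.act (0, t) x)
  have h3 : s - t + t = s := by ring
  rwa [← F.act_r_add, h3] at h2

lemma fixed_of_pos_period {x : E} {τ : ℝ} (hτ : 0 < τ) (hx : F.act (0, τ) x = x) :
    x ∈ F.rFixed := by
  have step1 : ∀ u : ℝ, 0 ≤ u → u ≤ τ → F.act (0, u) x = x := by
    intro u hu huτ
    refine F.fle_antisymm _ _ ?_ ?_
    · have h2 := F.fle_act_mono h1 huτ x
      rwa [hx] at h2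
    · exact F.fle_act_self h1 hu x
  have step2 : ∀ n : ℕ, ∀ u : ℝ, 0 ≤ u → u ≤ n * τ → F.act (0, u) x = x := by
    intro n
    induction n with
    | zero =>
      intro u hu hu'
      norm_num at hu'
      have hu0 : u = 0 := le_antisymm hu' hu
      rw [hu0]; exact F.act_r_zero x
    | succ n ih =>
      intro u hu hu'
      by_cases hcase : u ≤ τ
      · exact step1 u hu hcase
      · push_neg at hcase
        have hge : 0 ≤ u - τ := by linarith
        have hle : u - τ ≤ n * τ := by push_cast at hu'; linarith
        have huu : u - τ + τ = u := by ring
        rw [← huu, F.act_r_add, hx]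
        exact ih (u - τ) hge hle
  have stepPos : ∀ u : ℝ, 0 ≤ u → F.act (0, u) x = x := by
    intro u hu
    obtain ⟨n, hn⟩ := exists_nat_ge (u / τ)
    have hun : u ≤ n * τ := by
      rw [div_le_iff₀ hτ] at hn; linarith
    exact step2 n u hu hun
  intro t
  rcases le_or_gt 0 t with h | h
  · exact stepPos t h
  · have h2 := stepPos (-t) (by linarith)
    calc F.act (0, t) x = F.act (0, t) (F.act (0, -t) x) := by rw [h2]
      _ = F.act (0, t + -t) x := (F.act_r_add _ _ _).symm
      _ = x := by rw [add_neg_cancel]; exact F.act_r_zero x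

lemma fixed_of_period {x : E} {τ : ℝ} (hτ : τ ≠ 0) (hx : F.act (0, τ) x = x) :
    x ∈ F.rFixed := by
  rcases hτ.lt_or_gt with h | h
  · have hx' : F.act (0, -τ) x = x := by
      conv_lhs => rw [← hx]
      rw [← F.act_r_add, neg_add_cancel]
      exact F.act_r_zero x
    exact F.fixed_of_pos_period h1 (by linarith) hx'
  · exact F.fixed_of_pos_period h1 h hx

lemma act_inj {x : E} (hx : x ∉ F.rFixed) {t s : ℝ}
    (h : F.act (0, t) x = F.act (0, s) x) : t = s := by
  by_contra hne
  have hper : F.act (0, t - s) (F.act (0, s) x) = F.act (0, s) x := by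
    have h3 : t - s + s = t := by ring
    rw [← F.act_r_add, h3, h]
  have hyfix : F.act (0, s) x ∈ F.rFixed :=
    F.fixed_of_period h1 (sub_ne_zero.2 hne) hper
  have hxeq : F.act (0, -s) (F.act (0, s) x) = x := by
    rw [← F.act_r_add, neg_add_cancel]
    exact F.act_r_zero x
  have hxs : F.act (0, s) x = x := (hxeq.symm.trans (hyfix (-s))).symm
  exact hx (fun u => by rw [← hxs]; exact hyfix u)

lemma orbit_convex {x y : E} (hπ : F.π y = F.π x) {t s : ℝ}
    (h₁ : F.fle (F.act (0, t) x) y) (h₂ : F.fle y (F.act (0, s) x)) :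
    ∃ u : ℝ, F.act (0, u) x = y := by
  obtain ⟨φ, hφ⟩ := (h1 (F.π x)).exists_homeo
  have horb : Continuous fun u : ℝ =>
      (⟨F.act (0, u) x, F.act_fiber _ x⟩ : {z : E // F.π z = F.π x}) := by
    apply Continuous.subtype_mk
    exact F.act_cont.comp ((continuous_const.prodMk continuous_id).prodMk continuous_const)
  set f : ℝ → ℝ := fun u => φ ⟨F.act (0, u) x, F.act_fiber _ x⟩ with hfdef
  have hcont : Continuous f := φ.continuous.comp horb
  set y' : {z : E // F.π z = F.π x} := ⟨y, hπ⟩ with hy'def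
  have hy1 : f t ≤ φ y' := (hφ ⟨F.act (0, t) x, F.act_fiber _ x⟩ y').1 h₁
  have hy2 : φ y' ≤ f s := (hφ y' ⟨F.act (0, s) x, F.act_fiber _ x⟩).1 h₂
  have hmem : φ y' ∈ Set.uIcc (f t) (f s) := Set.Icc_subset_uIcc ⟨hy1, hy2⟩
  obtain ⟨u, -, hu⟩ := intermediate_value_uIcc hcont.continuousOn hmem
  exact ⟨u, congrArg Subtype.val (φ.injective hu)⟩

lemma lt_fdist_iff {x y : E} (hπ : F.π x = F.π y)
    (hd : ¬(x = y ∧ x ∈ F.rFixed)) (r : ℝ) :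
    (r : EReal) < F.fdist x y ↔ ¬ F.fle y (F.act (0, r) x) := by
  rw [fdist]
  split_ifs with h hle
  · have hxf : x ∉ F.rFixed := by
      intro hf
      exact hd ⟨by rw [← h.choose_spec, hf], hf⟩
    rw [EReal.coe_lt_coe_iff]
    constructor
    · intro hlt hcon
      have h2 : F.fle (F.act (0, r) x) (F.act (0, h.choose) x) :=
        F.fle_act_mono h1 hlt.le x
      rw [h.choose_spec] at h2
      have heq : F.act (0, r) x = y := F.fle_antisymm _ _ h2 hcon
      exact absurd (F.act_inj h1 hxf (heq.trans h.choose_spec.symm)) hlt.ne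
    · intro hcon
      by_contra hle'
      push_neg at hle'
      apply hcon
      rw [← h.choose_spec]
      exact F.fle_act_mono h1 hle' x
  · refine iff_of_true (EReal.coe_lt_top r) ?_
    intro hcon
    exact h (F.orbit_convex h1 hπ.symm (t := 0) (s := r)
      (by rw [F.act_r_zero]; exact hle) hcon)
  · have hyl : F.fle y (F.act (0, r) x) := by
      by_contra hc
      have h' : F.π (F.act (0, r) x) = F.π y := by rw [F.act_fiber]; exact hπ
      have hry : F.fle (F.act (0, r) x) y :=
        (F.fle_total y (F.act (0, r) x) h'.symm).resolve_left hc
      have hyx : F.fle y x := (F.fle_total x y hπ).resolve_left hle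
      exact h (F.orbit_convex h1 hπ.symm (t := r) (s := 0) hry
        (by rw [F.act_r_zero]; exact hyx))
    exact iff_of_false not_lt_bot (not_not_intro hyl)

lemma fdist_lt_iff {x y : E} (hπ : F.π x = F.π y)
    (hd : ¬(x = y ∧ x ∈ F.rFixed)) (r : ℝ) :
    F.fdist x y < (r : EReal) ↔ ¬ F.fle (F.act (0, r) x) y := by
  rw [fdist]
  split_ifs with h hle
  · have hxf : x ∉ F.rFixed := by
      intro hf
      exact hd ⟨by rw [← h.choose_spec, hf], hf⟩
    rw [EReal.coe_lt_coe_iff]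
    constructor
    · intro hlt hcon
      have h2 : F.fle (F.act (0, h.choose) x) (F.act (0, r) x) :=
        F.fle_act_mono h1 hlt.le x
      rw [h.choose_spec] at h2
      have heq : F.act (0, r) x = y := F.fle_antisymm _ _ hcon h2
      exact absurd (F.act_inj h1 hxf (heq.trans h.choose_spec.symm)) hlt.ne'
    · intro hcon
      by_contra hle'
      push_neg at hle'
      apply hcon
      rw [← h.choose_spec]
      exact F.fle_act_mono h1 hle' x
  · have hyl : F.fle (F.act (0, r) x) y := by
      by_contra hc
      have h' : F.π (F.act (0, r) x) = F.π y := by rw [F.act_fiber]; exact hπ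
      have hyu : F.fle y (F.act (0, r) x) :=
        (F.fle_total (F.act (0, r) x) y h').resolve_left hc
      exact h (F.orbit_convex h1 hπ.symm (t := 0) (s := r)
        (by rw [F.act_r_zero]; exact hle) hyu)
    exact iff_of_false not_top_lt (not_not_intro hyl)
  · refine iff_of_true (EReal.bot_lt_coe r) ?_
    intro hcon
    have hyx : F.fle y x := (F.fle_total x y hπ).resolve_left hle
    exact h (F.orbit_convex h1 hπ.symm (t := r) (s := 0) hcon
      (by rw [F.act_r_zero]; exact hyx))

end PreFamily

lemma EReal.bot_lt_iff_exists {a : EReal} : ⊥ < a ↔ ∃ r : ℝ, (r : EReal) < a := by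
  induction a using EReal.rec with
  | bot => simp
  | coe x =>
    refine iff_of_true (EReal.bot_lt_coe x) ⟨x - 1, ?_⟩
    rw [EReal.coe_lt_coe_iff]; linarith
  | top => exact iff_of_true bot_lt_top ⟨0, EReal.coe_lt_top 0⟩

lemma EReal.lt_top_iff_exists {a : EReal} : a < ⊤ ↔ ∃ r : ℝ, a < (r : EReal) := by
  induction a using EReal.rec with
  | bot => exact iff_of_true bot_lt_top ⟨0, EReal.bot_lt_coe 0⟩
  | coe x =>
    refine iff_of_true (EReal.coe_lt_top x) ⟨x + 1, ?_⟩
    rw [EReal.coe_lt_coe_iff]; linarith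
  | top => simp

/-- The fiberwise translation distance is continuous on its domain. -/
theorem fdist_continuous {S E : Type*} [TopologicalSpace S] [TopologicalSpace E]
    (F : PreFamily S E) (h1 : F.Q1) (h4 : F.Q4) :
    Continuous fun p : {q : E × E // F.π q.1 = F.π q.2 ∧ ¬(q.1 = q.2 ∧ q.1 ∈ F.rFixed)} =>
      F.fdist p.1.1 p.1.2 := by
  classical
  have hopenGT : ∀ r : ℝ,
      IsOpen {p : {q : E × E // F.π q.1 = F.π q.2 ∧ ¬(q.1 = q.2 ∧ q.1 ∈ F.rFixed)} |
        (r : EReal) < F.fdist p.1.1 p.1.2} := by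
    intro r
    have hg : Continuous fun p : {q : E × E // F.π q.1 = F.π q.2 ∧ ¬(q.1 = q.2 ∧ q.1 ∈ F.rFixed)} =>
        (⟨(p.1.2, F.act (0, r) p.1.1), by
          show F.π p.1.2 = F.π (F.act (0, r) p.1.1)
          rw [F.act_fiber]; exact p.2.1.symm⟩ : F.fibProd) := by
      apply Continuous.subtype_mk
      apply Continuous.prodMk
      · exact continuous_snd.comp continuous_subtype_val
      · have hc : Continuous fun p : {q : E × E // F.π q.1 = F.π q.2 ∧ ¬(q.1 = q.2 ∧ q.1 ∈ F.rFixed)} =>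
            ((((0 : ℤ), r) : ℤ × ℝ), p.1.1) :=
          continuous_const.prodMk (continuous_fst.comp continuous_subtype_val)
        exact F.act_cont.comp hc
    have heq : {p : {q : E × E // F.π q.1 = F.π q.2 ∧ ¬(q.1 = q.2 ∧ q.1 ∈ F.rFixed)} |
          (r : EReal) < F.fdist p.1.1 p.1.2}
        = ((fun p : {q : E × E // F.π q.1 = F.π q.2 ∧ ¬(q.1 = q.2 ∧ q.1 ∈ F.rFixed)} =>
            (⟨(p.1.2, F.act (0, r) p.1.1), by
              show F.π p.1.2 = F.π (F.act (0, r) p.1.1)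
              rw [F.act_fiber]; exact p.2.1.symm⟩ : F.fibProd))
            ⁻¹' {p : F.fibProd | F.fle p.1.1 p.1.2})ᶜ := by
      ext p
      simp only [Set.mem_setOf_eq, Set.mem_compl_iff, Set.mem_preimage]
      exact F.lt_fdist_iff h1 p.2.1 p.2.2 r
    rw [heq]
    exact (h4.preimage hg).isOpen_compl
  have hopenLT : ∀ r : ℝ,
      IsOpen {p : {q : E × E // F.π q.1 = F.π q.2 ∧ ¬(q.1 = q.2 ∧ q.1 ∈ F.rFixed)} |
        F.fdist p.1.1 p.1.2 < (r : EReal)} := by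
    intro r
    have hg : Continuous fun p : {q : E × E // F.π q.1 = F.π q.2 ∧ ¬(q.1 = q.2 ∧ q.1 ∈ F.rFixed)} =>
        (⟨(F.act (0, r) p.1.1, p.1.2), by
          show F.π (F.act (0, r) p.1.1) = F.π p.1.2
          rw [F.act_fiber]; exact p.2.1⟩ : F.fibProd) := by
      apply Continuous.subtype_mk
      apply Continuous.prodMk
      · have hc : Continuous fun p : {q : E × E // F.π q.1 = F.π q.2 ∧ ¬(q.1 = q.2 ∧ q.1 ∈ F.rFixed)} =>
            ((((0 : ℤ), r) : ℤ × ℝ), p.1.1) :=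
          continuous_const.prodMk (continuous_fst.comp continuous_subtype_val)
        exact F.act_cont.comp hc
      · exact continuous_snd.comp continuous_subtype_val
    have heq : {p : {q : E × E // F.π q.1 = F.π q.2 ∧ ¬(q.1 = q.2 ∧ q.1 ∈ F.rFixed)} |
          F.fdist p.1.1 p.1.2 < (r : EReal)}
        = ((fun p : {q : E × E // F.π q.1 = F.π q.2 ∧ ¬(q.1 = q.2 ∧ q.1 ∈ F.rFixed)} =>
            (⟨(F.act (0, r) p.1.1, p.1.2), by
              show F.π (F.act (0, r) p.1.1) = F.π p.1.2
              rw [F.act_fiber]; exact p.2.1⟩ : F.fibProd))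
            ⁻¹' {p : F.fibProd | F.fle p.1.1 p.1.2})ᶜ := by
      ext p
      simp only [Set.mem_setOf_eq, Set.mem_compl_iff, Set.mem_preimage]
      exact F.fdist_lt_iff h1 p.2.1 p.2.2 r
    rw [heq]
    exact (h4.preimage hg).isOpen_compl
  rw [OrderTopology.topology_eq_generate_intervals (α := EReal),
    continuous_generateFrom_iff]
  rintro s ⟨a, rfl | rfl⟩
  · induction a using EReal.rec with
    | bot =>
      have heq : (fun p : {q : E × E // F.π q.1 = F.π q.2 ∧ ¬(q.1 = q.2 ∧ q.1 ∈ F.rFixed)} =>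
            F.fdist p.1.1 p.1.2) ⁻¹' Set.Ioi ⊥
          = ⋃ r : ℝ, {p : {q : E × E // F.π q.1 = F.π q.2 ∧ ¬(q.1 = q.2 ∧ q.1 ∈ F.rFixed)} |
              (r : EReal) < F.fdist p.1.1 p.1.2} := by
        ext p
        simp only [Set.mem_preimage, Set.mem_Ioi, Set.mem_iUnion, Set.mem_setOf_eq]
        exact EReal.bot_lt_iff_exists
      rw [heq]
      exact isOpen_iUnion fun r => hopenGT r
    | coe r => exact hopenGT r
    | top =>
      convert isOpen_empty
      ext p
      simp only [Set.mem_preimage, Set.mem_Ioi, Set.mem_empty_iff_false, iff_false]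
      exact not_top_lt
  · induction a using EReal.rec with
    | bot =>
      convert isOpen_empty
      ext p
      simp only [Set.mem_preimage, Set.mem_Iio, Set.mem_empty_iff_false, iff_false]
      exact not_lt_bot
    | coe r => exact hopenLT r
    | top =>
      have heq : (fun p : {q : E × E // F.π q.1 = F.π q.2 ∧ ¬(q.1 = q.2 ∧ q.1 ∈ F.rFixed)} =>
            F.fdist p.1.1 p.1.2) ⁻¹' Set.Iio ⊤
          = ⋃ r : ℝ, {p : {q : E × E // F.π q.1 = F.π q.2 ∧ ¬(q.1 = q.2 ∧ q.1 ∈ F.rFixed)} |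
              F.fdist p.1.1 p.1.2 < (r : EReal)} := by
        ext p
        simp only [Set.mem_preimage, Set.mem_Iio, Set.mem_iUnion, Set.mem_setOf_eq]
        exact EReal.lt_top_iff_exists
      rw [heq]
      exact isOpen_iUnion fun r => hopenLT r

end
end

section
/- Let π: L_S → S be a continuous map equipped with a continuous fiber-preserving ℤ × ℝ-action and a linear order on each fiber, satisfying properties (Q1), (Q4), and (Q5). Then the quotient map L_S → L_S/ℤ onto the orbit space of the ℤ-action is a covering map. -/
open Topology

noncomputable section

/-! ### Auxiliary lemmas -/

namespace ParaData

variable {L : Type*} [TopologicalSpace L] {D : ParaData L}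

theorem IsBrokenParacycle.act_comp (hD : D.IsBrokenParacycle) (g h : ℤ × ℝ) (x : L) :
    D.act g (D.act h x) = D.act (g + h) x := (hD.act_add g h x).symm

theorem IsBrokenParacycle.act_single_cont (hD : D.IsBrokenParacycle) (g : ℤ × ℝ) :
    Continuous (D.act g) := hD.act_cont.comp (continuous_const.prodMk continuous_id)

theorem IsBrokenParacycle.rFixed_act (hD : D.IsBrokenParacycle) {x : L} (hx : x ∈ D.rFixed)
    (g : ℤ × ℝ) : D.act g x ∈ D.rFixed := by
  intro t
  rw [hD.act_comp, add_comm, ← hD.act_comp, hx t]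

theorem IsBrokenParacycle.rFixed_act_iff (hD : D.IsBrokenParacycle) (x : L) (g : ℤ × ℝ) :
    D.act g x ∈ D.rFixed ↔ x ∈ D.rFixed := by
  refine ⟨fun h => ?_, fun h => hD.rFixed_act h g⟩
  have h2 := hD.rFixed_act h (-g)
  rwa [hD.act_comp, neg_add_cancel, hD.act_zero] at h2

theorem IsBrokenParacycle.exists_phi (hD : D.IsBrokenParacycle) :
    ∃ φ : L ≃ₜ ℝ, (∀ x y, D.le x y ↔ φ x ≤ φ y) ∧
      Continuous (fun t => φ (D.act (1, 0) (φ.symm t))) ∧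
      StrictMono (fun t => φ (D.act (1, 0) (φ.symm t))) ∧
      (∀ t, t < φ (D.act (1, 0) (φ.symm t))) := by
  obtain ⟨φ, hφ⟩ := hD.exists_homeo
  set f : ℝ → ℝ := fun t => φ (D.act (1, 0) (φ.symm t)) with hf
  have hcont : Continuous f :=
    φ.continuous.comp ((hD.act_single_cont (1, 0)).comp φ.symm.continuous)
  have hgt : ∀ t, t < f t := by
    intro t
    have h1 : D.le (φ.symm t) (D.act (1, 0) (φ.symm t)) := hD.z_directed _
    have h2 := (hφ _ _).1 h1
    rw [φ.apply_symm_apply] at h2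
    refine lt_of_le_of_ne h2 fun h => ?_
    have h3 : D.act (1, 0) (φ.symm t) = φ.symm t := by
      apply φ.injective; rw [φ.apply_symm_apply]; exact h.symm
    exact one_ne_zero (hD.z_free 1 _ h3)
  have hinj : Function.Injective f := by
    intro s t h
    have h1 := φ.injective h
    have h2 : φ.symm s = φ.symm t := by
      have h3 := congrArg (D.act (-1, 0)) h1
      rwa [hD.act_comp, hD.act_comp,
        show ((-1 : ℤ), (0 : ℝ)) + (1, 0) = 0 by simp [Prod.ext_iff],
        hD.act_zero, hD.act_zero] at h3
    exact φ.symm.injective h2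
  have hmono : StrictMono f := by
    rcases hcont.strictMono_of_inj hinj with h | h
    · exact h
    · exfalso
      have h1 : f (max (f 0) 1) < f 0 := h (lt_of_lt_of_le one_pos (le_max_right _ _))
      have h2 : f 0 ≤ max (f 0) 1 := le_max_left _ _
      have h3 := hgt (max (f 0) 1)
      linarith
  exact ⟨φ, hφ, hcont, hmono, hgt⟩

theorem IsBrokenParacycle.shift_mono (hD : D.IsBrokenParacycle) {u v : L} (h : D.le u v) :
    D.le (D.act (1, 0) u) (D.act (1, 0) v) := by
  obtain ⟨φ, hφ, _, hmono, _⟩ := hD.exists_phi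
  rw [hφ] at h ⊢
  have h2 := hmono.monotone h
  simpa [φ.symm_apply_apply] using h2

theorem IsBrokenParacycle.le_shift_nat (hD : D.IsBrokenParacycle) (u : L) (m : ℕ) :
    D.le u (D.act ((m : ℤ), 0) u) := by
  obtain ⟨φ, hφ⟩ := hD.exists_homeo
  induction m with
  | zero =>
      rw [show (((0 : ℕ) : ℤ), (0 : ℝ)) = (0 : ℤ × ℝ) by simp, hD.act_zero]
      exact (hφ u u).2 le_rfl
  | succ m ih =>
      have hstep : D.le (D.act ((m : ℤ), 0) u) (D.act (((m + 1 : ℕ) : ℤ), 0) u) := by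
        have h1 := hD.z_directed (D.act ((m : ℤ), 0) u)
        rwa [hD.act_comp, show ((1 : ℤ), (0 : ℝ)) + ((m : ℤ), 0) = (((m + 1 : ℕ) : ℤ), 0) by
          simp [Prod.ext_iff]; ring] at h1
      exact (hφ _ _).2 (le_trans ((hφ _ _).1 ih) ((hφ _ _).1 hstep))

theorem IsBrokenParacycle.fixed_of_stab (hD : D.IsBrokenParacycle) {x : L} {u : ℝ}
    (hu : 0 < u) (hx : D.act (0, u) x = x) : x ∈ D.rFixed := by
  obtain ⟨φ, hφ⟩ := hD.exists_homeo
  have hk : ∀ k : ℕ, D.act (0, (k : ℝ) * u) x = x := by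
    intro k
    induction k with
    | zero => rw [show ((0 : ℤ), ((0 : ℕ) : ℝ) * u) = (0 : ℤ × ℝ) by simp, hD.act_zero]
    | succ k ih =>
        rw [show ((0 : ℤ), ((k + 1 : ℕ) : ℝ) * u) = ((0 : ℤ), u) + ((0 : ℤ), (k : ℝ) * u) by
          simp [Prod.ext_iff]; ring, hD.act_add, ih, hx]
  intro t
  obtain ⟨K, hK⟩ := exists_nat_ge ((-t) / u)
  obtain ⟨M, hM⟩ := exists_nat_ge (t / u)
  have hKu : 0 ≤ t + (K : ℝ) * u := by
    have h1 := (div_le_iff₀ hu).1 hK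
    linarith
  have hMu : 0 ≤ (M : ℝ) * u - t := by
    have h1 := (div_le_iff₀ hu).1 hM
    linarith
  have h1 : D.le x (D.act (0, t) x) := by
    have h2 := hD.r_directed (t + (K : ℝ) * u) hKu x
    rwa [show ((0 : ℤ), t + (K : ℝ) * u) = ((0 : ℤ), t) + ((0 : ℤ), (K : ℝ) * u) by
      simp [Prod.ext_iff], hD.act_add, hk K] at h2
  have h2 : D.le (D.act (0, t) x) x := by
    have h3 := hD.r_directed ((M : ℝ) * u - t) hMu (D.act (0, t) x)
    rwa [hD.act_comp,
      show ((0 : ℤ), (M : ℝ) * u - t) + ((0 : ℤ), t) = ((0 : ℤ), (M : ℝ) * u) by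
        simp [Prod.ext_iff], hk M] at h3
  exact φ.injective (le_antisymm ((hφ _ _).1 h2) ((hφ _ _).1 h1))

theorem IsBrokenParacycle.fixed_of_stab' (hD : D.IsBrokenParacycle) {x : L} {u : ℝ}
    (hu : u ≠ 0) (hx : D.act (0, u) x = x) : x ∈ D.rFixed := by
  rcases hu.lt_or_gt with h | h
  · apply hD.fixed_of_stab (u := -u) (by linarith)
    have h2 := congrArg (D.act (0, -u)) hx
    rw [hD.act_comp, show ((0 : ℤ), -u) + ((0 : ℤ), u) = 0 by simp [Prod.ext_iff],
      hD.act_zero] at h2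
    exact h2.symm
  · exact hD.fixed_of_stab h hx


theorem IsBrokenParacycle.exists_good (hD : D.IsBrokenParacycle) (x : L) :
    ∃ a : L, a ∉ D.rFixed ∧ ¬ D.le x a ∧ ¬ D.le (D.act (1, 0) a) x := by
  obtain ⟨φ, hφ, hfc, hfm, hfg⟩ := hD.exists_phi
  have hlt_iff : ∀ u v : L, ¬ D.le u v ↔ φ v < φ u := by
    intro u v; rw [hφ, not_le]
  by_cases hx : x ∈ D.rFixed
  · have hz : ∃ z : L, z ∉ D.rFixed := by
      by_contra hzz
      push_neg at hzz
      have h1 : IsOpen ({⟨x, hx⟩} : Set D.rFixed) := by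
        have := hD.fixed_discrete; exact isOpen_discrete _
      obtain ⟨O, hO, hOx⟩ := isOpen_induced_iff.1 h1
      have hOeq : O = {x} := by
        ext y
        constructor
        · intro hy
          have h2 : (⟨y, hzz y⟩ : D.rFixed) ∈ Subtype.val ⁻¹' O := hy
          rw [hOx] at h2
          simpa using congrArg Subtype.val h2
        · intro hy
          have h3 : y = x := hy
          subst h3
          have h2 : (⟨y, hx⟩ : D.rFixed) ∈ Subtype.val ⁻¹' O := by rw [hOx]; rfl
          exact h2
      have h2 : IsOpen ({φ x} : Set ℝ) := by
        have h3 := φ.isOpenMap O hO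
        rwa [hOeq, Set.image_singleton] at h3
      obtain ⟨y, hy1, hy2⟩ := (dense_compl_singleton (φ x)).inter_open_nonempty _ h2 ⟨φ x, rfl⟩
      exact hy2 hy1
    obtain ⟨z, hz⟩ := hz
    set c : ℤ → ℝ := fun k => φ (D.act (k, 0) z) with hc
    have hstep : ∀ k : ℤ, D.act (1, 0) (D.act (k, 0) z) = D.act (k + 1, 0) z := by
      intro k
      rw [hD.act_comp]
      congr 1
      simp [Prod.ext_iff]; ring
    have hcf : ∀ k : ℤ, φ (D.act (1, 0) (φ.symm (c k))) = c (k + 1) := by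
      intro k
      simp only [hc]
      rw [φ.symm_apply_apply, hstep]
    have hcmono : StrictMono c := by
      apply strictMono_int_of_lt_succ
      intro k
      have h1 := hfg (c k)
      rwa [hcf k] at h1
    have claim : ∀ b : ℝ, (∀ k : ℤ, b ≤ c k) → False := by
      intro b hb
      set d : ℕ → ℝ := fun n => c (-(n : ℤ)) with hd
      have hanti : Antitone d := fun m n hmn => hcmono.le_iff_le.2 (by omega)
      have hbdd : BddBelow (Set.range d) := ⟨b, by rintro r ⟨n, rfl⟩; exact hb _⟩
      have hlim := tendsto_atTop_ciInf hanti hbdd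
      have hlim2 : Filter.Tendsto (fun n => d (n + 1)) Filter.atTop (𝓝 (⨅ n, d n)) :=
        hlim.comp (Filter.tendsto_add_atTop_nat 1)
      have hlim3 := (hfc.tendsto _).comp hlim2
      have heq : ∀ n : ℕ, φ (D.act (1, 0) (φ.symm (d (n + 1)))) = d n := by
        intro n
        have h := hcf (-(n : ℤ) - 1)
        have e1 : (-(n : ℤ) - 1) + 1 = -(n : ℤ) := by ring
        rw [e1] at h
        have e2 : (-(((n + 1) : ℕ) : ℤ)) = -(n : ℤ) - 1 := by push_cast; ring
        simp only [hd, e2]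
        exact h
      have hlim4 : Filter.Tendsto (fun n => d n) Filter.atTop
          (𝓝 (φ (D.act (1, 0) (φ.symm (⨅ n, d n))))) := hlim3.congr heq
      have h5 := tendsto_nhds_unique hlim4 hlim
      exact absurd h5 (ne_of_gt (hfg _))
    have claim' : ∀ b : ℝ, (∀ k : ℤ, c k ≤ b) → False := by
      intro b hb
      set d : ℕ → ℝ := fun n => c (n : ℤ) with hd
      have hmono' : Monotone d := fun m n hmn => hcmono.le_iff_le.2 (by omega)
      have hbdd : BddAbove (Set.range d) := ⟨b, by rintro r ⟨n, rfl⟩; exact hb _⟩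
      have hlim := tendsto_atTop_ciSup hmono' hbdd
      have hlim3 := (hfc.tendsto _).comp hlim
      have heq : ∀ n : ℕ, φ (D.act (1, 0) (φ.symm (d n))) = d (n + 1) := by
        intro n
        have h := hcf (n : ℤ)
        have e2 : ((n : ℤ) + 1) = (((n + 1) : ℕ) : ℤ) := by push_cast; ring
        rw [e2] at h
        simp only [hd]
        exact h
      have hlim4 : Filter.Tendsto (fun n => d (n + 1)) Filter.atTop
          (𝓝 (φ (D.act (1, 0) (φ.symm (⨆ n, d n))))) := hlim3.congr heq
      have hlim5 : Filter.Tendsto (fun n => d (n + 1)) Filter.atTop (𝓝 (⨆ n, d n)) :=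
        hlim.comp (Filter.tendsto_add_atTop_nat 1)
      have h5 := tendsto_nhds_unique hlim4 hlim5
      exact absurd h5 (ne_of_gt (hfg _))
    have hS1 : ∃ k : ℤ, c k < φ x := by
      by_contra h
      push_neg at h
      exact claim (φ x) h
    have hS2 : ∃ k : ℤ, φ x ≤ c k := by
      by_contra h
      push_neg at h
      exact claim' (φ x) fun k => (h k).le
    obtain ⟨k1, hk1⟩ := hS2
    obtain ⟨k0, hk0, hk0m⟩ := Int.exists_greatest_of_bdd (P := fun k => c k < φ x)
      ⟨k1, fun k hk => le_of_not_gt fun hh => absurd hk (not_lt.2 (le_trans hk1 (hcmono hh).le))⟩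
      hS1
    refine ⟨D.act (k0, 0) z, ?_, ?_, ?_⟩
    · intro hfix
      exact hz ((hD.rFixed_act_iff z (k0, 0)).1 hfix)
    · rw [hlt_iff]
      exact hk0
    · rw [hlt_iff, hstep k0]
      show φ x < c (k0 + 1)
      have hle : φ x ≤ c (k0 + 1) := le_of_not_gt fun h => by have := hk0m _ h; omega
      refine lt_of_le_of_ne hle fun h => ?_
      have h2 : x = D.act (k0 + 1, 0) z := φ.injective h
      exact hz ((hD.rFixed_act_iff z (k0 + 1, 0)).1 (by rw [← h2]; exact hx))
  · have hne : ∀ u : ℝ, u ≠ 0 → D.act (0, u) x ≠ x := fun u hu h =>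
      hx (hD.fixed_of_stab' hu h)
    set xm := D.act (-1, 0) x with hxm
    have hxm_act : D.act (1, 0) xm = x := by
      rw [hxm, hD.act_comp, show ((1 : ℤ), (0 : ℝ)) + ((-1 : ℤ), (0 : ℝ)) = 0 by
        simp [Prod.ext_iff], hD.act_zero]
    have hxm_lt : φ xm < φ x := by
      have h1 : D.le xm (D.act (1, 0) xm) := hD.z_directed xm
      rw [hxm_act] at h1
      refine lt_of_le_of_ne ((hφ _ _).1 h1) fun h => ?_
      have h2 : xm = x := φ.injective h
      rw [h2] at hxm_act
      exact one_ne_zero (hD.z_free 1 x hxm_act)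
    have hgc : Continuous fun u : ℝ => φ (D.act (0, u) xm) :=
      φ.continuous.comp (hD.act_cont.comp
        ((continuous_const.prodMk continuous_id).prodMk continuous_const))
    have hev : ∀ᶠ u in 𝓝[>] (0 : ℝ), φ (D.act (0, u) xm) < φ x := by
      have h0 : φ (D.act ((0 : ℤ), (0 : ℝ)) xm) = φ xm := by
        rw [show ((0 : ℤ), (0 : ℝ)) = (0 : ℤ × ℝ) from rfl, hD.act_zero]
      have h1 := hgc.tendsto 0
      rw [h0] at h1
      exact (h1.eventually_lt_const hxm_lt).filter_mono nhdsWithin_le_nhds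
    obtain ⟨u, hu_lt, hu_pos⟩ := (hev.and eventually_mem_nhdsWithin).exists
    have hu0 : (0 : ℝ) < u := hu_pos
    refine ⟨D.act (0, u) xm, ?_, ?_, ?_⟩
    · intro hfix
      apply hx
      have h2 : D.act ((1 : ℤ), -u) (D.act (0, u) xm) = x := by
        rw [hxm, hD.act_comp, hD.act_comp,
          show ((1 : ℤ), -u) + ((0 : ℤ), u) + ((-1 : ℤ), (0 : ℝ)) = 0 by simp [Prod.ext_iff],
          hD.act_zero]
      rw [← h2]
      exact hD.rFixed_act hfix _
    · rw [hlt_iff]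
      exact hu_lt
    · rw [hlt_iff]
      have hact : D.act (1, 0) (D.act (0, u) xm) = D.act (0, u) x := by
        rw [hxm, hD.act_comp, hD.act_comp,
          show ((1 : ℤ), (0 : ℝ)) + ((0 : ℤ), u) + ((-1 : ℤ), (0 : ℝ)) = ((0 : ℤ), u) by
            simp [Prod.ext_iff]]
      rw [hact]
      have hle : D.le x (D.act (0, u) x) := hD.r_directed u hu0.le x
      refine lt_of_le_of_ne ((hφ _ _).1 hle) fun h => ?_
      exact hne u (ne_of_gt hu0) (φ.injective h.symm)


end ParaData

namespace PreFamily

variable {S E : Type*} [TopologicalSpace S] [TopologicalSpace E] (F : PreFamily S E)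

theorem act_comp (g h : ℤ × ℝ) (x : E) : F.act g (F.act h x) = F.act (g + h) x :=
  (F.act_add g h x).symm

theorem act_single_cont (g : ℤ × ℝ) : Continuous (F.act g) :=
  F.act_cont.comp (continuous_const.prodMk continuous_id)

theorem zrel_equivalence : Equivalence F.zrel := by
  refine ⟨fun x => ⟨0, F.act_zero x⟩, ?_, ?_⟩
  · rintro x y ⟨n, rfl⟩
    refine ⟨-n, ?_⟩
    rw [F.act_comp, show ((-n : ℤ), (0 : ℝ)) + (n, 0) = 0 by simp [Prod.ext_iff], F.act_zero]
  · rintro x y z ⟨m, rfl⟩ ⟨n, rfl⟩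
    refine ⟨n + m, ?_⟩
    rw [F.act_comp]
    congr 1
    simp [Prod.ext_iff]

theorem quot_mk_eq_iff (a b : E) : Quot.mk F.zrel a = Quot.mk F.zrel b ↔ F.zrel a b := by
  rw [Quot.eq]
  exact F.zrel_equivalence.eqvGen_iff

theorem quot_mk_act (n : ℤ) (w : E) :
    Quot.mk F.zrel (F.act (n, 0) w) = Quot.mk F.zrel w :=
  (Quot.sound ⟨n, rfl⟩).symm

theorem isOpenMap_quot_mk : IsOpenMap (Quot.mk F.zrel : E → F.ZQuot) := by
  intro O hO
  have key : (Quot.mk F.zrel : E → F.ZQuot) ⁻¹' (Quot.mk F.zrel '' O)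
      = ⋃ n : ℤ, (fun y => F.act (n, 0) y) ⁻¹' O := by
    ext y
    simp only [Set.mem_preimage, Set.mem_image, Set.mem_iUnion]
    constructor
    · rintro ⟨v, hv, hpv⟩
      obtain ⟨n, rfl⟩ := (F.quot_mk_eq_iff v y).1 hpv
      refine ⟨-n, ?_⟩
      rw [F.act_comp, show ((-n : ℤ), (0 : ℝ)) + (n, 0) = 0 by simp [Prod.ext_iff], F.act_zero]
      exact hv
    · rintro ⟨n, hn⟩
      exact ⟨F.act (n, 0) y, hn, F.quot_mk_act n y⟩
  have hop : IsOpen ((Quot.mk F.zrel : E → F.ZQuot) ⁻¹' (Quot.mk F.zrel '' O)) := by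
    rw [key]
    exact isOpen_iUnion fun n => hO.preimage (F.act_single_cont (n, 0))
  exact isQuotientMap_quot_mk.isOpen_preimage.1 hop

theorem exists_good_nbhd (h1 : F.Q1) (h4 : F.Q4) (h5 : F.Q5) (x0 : E) :
    ∃ V : Set E, IsOpen V ∧ x0 ∈ V ∧
      ∀ (n : ℤ) (y : E), y ∈ V → F.act (n, 0) y ∈ V → n = 0 := by
  obtain ⟨a, ha_nf, ha1, ha2⟩ :=
    (h1 (F.π x0)).exists_good (⟨x0, rfl⟩ : {x : E // F.π x = F.π x0})
  have ha_nf' : a.1 ∉ F.rFixed := fun h => ha_nf fun t => Subtype.ext (h t)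
  obtain ⟨U, hUo, hUm, σ, hσc, hσs, hσn, hσa⟩ := h5 a.1 ha_nf'
  set P : Set E := F.π ⁻¹' U with hP
  have hPo : IsOpen P := hUo.preimage F.π_cont
  set cmap : P → E := fun y => σ ⟨F.π y.1, y.2⟩ with hcmap
  have hccont : Continuous cmap :=
    hσc.comp (Continuous.subtype_mk (F.π_cont.comp continuous_subtype_val) fun y => y.2)
  have hcfib : ∀ y : P, F.π (cmap y) = F.π y.1 := fun y => hσs ⟨F.π y.1, y.2⟩
  have hA : IsClosed {y : P | F.fle y.1 (cmap y)} := by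
    have hΦ : Continuous fun y : P =>
        (⟨(y.1, cmap y), (hcfib y).symm⟩ : F.fibProd) :=
      Continuous.subtype_mk (continuous_subtype_val.prodMk hccont) _
    exact h4.preimage hΦ
  have hB : IsClosed {y : P | F.fle (F.act (1, 0) (cmap y)) y.1} := by
    have hΨ : Continuous fun y : P =>
        (⟨(F.act (1, 0) (cmap y), y.1), by
          show F.π (F.act (1, 0) (cmap y)) = F.π y.1
          rw [F.act_fiber]; exact hcfib y⟩ : F.fibProd) :=
      Continuous.subtype_mk
        (((F.act_single_cont (1, 0)).comp hccont).prodMk continuous_subtype_val) _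
    exact h4.preimage hΨ
  set V : Set E := Subtype.val ''
    ({y : P | F.fle y.1 (cmap y)}ᶜ ∩ {y : P | F.fle (F.act (1, 0) (cmap y)) y.1}ᶜ) with hV
  have hVo : IsOpen V :=
    hPo.isOpenMap_subtype_val _ (hA.isOpen_compl.inter hB.isOpen_compl)
  have hVmem : ∀ y : E, y ∈ V ↔ ∃ h : F.π y ∈ U,
      ¬ F.fle y (σ ⟨F.π y, h⟩) ∧ ¬ F.fle (F.act (1, 0) (σ ⟨F.π y, h⟩)) y := by
    intro y
    constructor
    · rintro ⟨⟨y', hy'⟩, hmem, rfl⟩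
      exact ⟨hy', hmem.1, hmem.2⟩
    · rintro ⟨h, h1', h2'⟩
      exact ⟨⟨y, h⟩, ⟨h1', h2'⟩, rfl⟩
  have hx0P : F.π x0 ∈ U := a.2 ▸ hUm
  have hσx0 : σ ⟨F.π x0, hx0P⟩ = a.1 := hσa ⟨F.π x0, hx0P⟩ (by rw [a.2])
  have hx0V : x0 ∈ V := by
    refine (hVmem x0).2 ⟨hx0P, ?_, ?_⟩
    · rw [hσx0]; exact ha1
    · rw [hσx0]; exact ha2
  have half : ∀ n : ℤ, 1 ≤ n → ∀ y : E, y ∈ V → F.act (n, 0) y ∈ V → False := by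
    intro n hn y hy hz
    obtain ⟨hyU, hy1, hy2⟩ := (hVmem y).1 hy
    obtain ⟨hzU, hz1, hz2⟩ := (hVmem _).1 hz
    have hπz : F.π (F.act (n, 0) y) = F.π y := F.act_fiber _ _
    have hσeq : σ ⟨F.π (F.act (n, 0) y), hzU⟩ = σ ⟨F.π y, hyU⟩ := by
      congr 1
      exact Subtype.ext hπz
    rw [hσeq] at hz2
    have hcyfib : F.π (σ ⟨F.π y, hyU⟩) = F.π y := hσs _
    have hcy_le : F.fle (σ ⟨F.π y, hyU⟩) y := by
      rcases F.fle_total _ y hcyfib with h | h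
      · exact h
      · exact absurd h hy1
    have hD := h1 (F.π y)
    have hmono : F.fle (F.act (1, 0) (σ ⟨F.π y, hyU⟩)) (F.act (1, 0) y) :=
      hD.shift_mono (u := (⟨σ ⟨F.π y, hyU⟩, hcyfib⟩ : {x : E // F.π x = F.π y}))
        (v := ⟨y, rfl⟩) hcy_le
    have hchain : F.fle (F.act (1, 0) y)
        (F.act (((n - 1).toNat : ℤ), 0) (F.act (1, 0) y)) :=
      hD.le_shift_nat (⟨F.act (1, 0) y, F.act_fiber _ _⟩ : {x : E // F.π x = F.π y})
        (n - 1).toNat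
    have hcomp : F.act (((n - 1).toNat : ℤ), 0) (F.act (1, 0) y) = F.act (n, 0) y := by
      rw [F.act_comp]
      congr 1
      have hnn : ((n - 1).toNat : ℤ) = n - 1 := Int.toNat_of_nonneg (by omega)
      rw [Prod.mk_add_mk, hnn, Prod.mk.injEq]
      constructor
      · ring
      · norm_num
    rw [hcomp] at hchain
    exact hz2 (F.fle_trans _ _ _ hmono hchain)
  refine ⟨V, hVo, hx0V, ?_⟩
  intro n y hy hz
  by_contra hn0
  rcases lt_or_gt_of_ne hn0 with h | h
  · refine half (-n) (by omega) (F.act (n, 0) y) hz ?_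
    rw [F.act_comp, show ((-n : ℤ), (0 : ℝ)) + (n, 0) = 0 by simp [Prod.ext_iff], F.act_zero]
    exact hy
  · exact half n (by omega) y hy hz

open Classical in
/-- Index of the chart containing a point. -/
noncomputable def chartIndex (F : PreFamily S E) (V : Set E) (y : E) : ℤ :=
  if h : ∃ n : ℤ, F.act (n, 0) y ∈ V then h.choose else 0

open Classical in
/-- Local section of the quotient map. -/
noncomputable def chartSec (F : PreFamily S E) (V : Set E) (x0 : E) (q : F.ZQuot) : E :=
  if h : ∃ v, v ∈ V ∧ Quot.mk F.zrel v = q then h.choose else x0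

theorem exists_triv (x0 : E) (V : Set E) (hVo : IsOpen V) (hx0 : x0 ∈ V)
    (hdisj : ∀ (n : ℤ) (y : E), y ∈ V → F.act (n, 0) y ∈ V → n = 0) :
    ∃ t : Bundle.Trivialization ℤ (Quot.mk F.zrel : E → F.ZQuot),
      Quot.mk F.zrel x0 ∈ t.baseSet := by
  classical
  have huniq : ∀ (y : E) (m n : ℤ), F.act (m, 0) y ∈ V → F.act (n, 0) y ∈ V → m = n := by
    intro y m n hm hn
    have h1 : F.act (n - m, 0) (F.act (m, 0) y) ∈ V := by
      rw [F.act_comp, show ((n - m : ℤ), (0 : ℝ)) + (m, 0) = ((n : ℤ), (0 : ℝ)) by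
        simp [Prod.ext_iff]]
      exact hn
    have h2 := hdisj (n - m) _ hm h1
    omega
  have hinjV : ∀ v ∈ V, ∀ w ∈ V, Quot.mk F.zrel v = Quot.mk F.zrel w → v = w := by
    intro v hv w hw hvw
    obtain ⟨n, rfl⟩ := (F.quot_mk_eq_iff v w).1 hvw
    have h0 := hdisj n v hv hw
    subst h0
    exact (show F.act ((0 : ℤ), (0 : ℝ)) v = v by
      rw [show ((0 : ℤ), (0 : ℝ)) = (0 : ℤ × ℝ) from rfl, F.act_zero]).symm
  set U : Set F.ZQuot := Quot.mk F.zrel '' V with hU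
  have hUo : IsOpen U := F.isOpenMap_quot_mk V hVo
  have hWU : ∀ y : E, Quot.mk F.zrel y ∈ U ↔ ∃ n : ℤ, F.act (n, 0) y ∈ V := by
    intro y
    constructor
    · rintro ⟨v, hv, hpv⟩
      obtain ⟨n, rfl⟩ := (F.quot_mk_eq_iff v y).1 hpv
      refine ⟨-n, ?_⟩
      rw [F.act_comp, show ((-n : ℤ), (0 : ℝ)) + (n, 0) = 0 by simp [Prod.ext_iff], F.act_zero]
      exact hv
    · rintro ⟨n, hn⟩
      exact ⟨F.act (n, 0) y, hn, F.quot_mk_act n y⟩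
  have hind : ∀ y : E, Quot.mk F.zrel y ∈ U → F.act (chartIndex F V y, 0) y ∈ V := by
    intro y hy
    have hex := (hWU y).1 hy
    rw [chartIndex, dif_pos hex]
    exact hex.choose_spec
  have hind_eq : ∀ (y : E) (n : ℤ), F.act (n, 0) y ∈ V → chartIndex F V y = n := by
    intro y n hn
    have hex : ∃ m : ℤ, F.act (m, 0) y ∈ V := ⟨n, hn⟩
    rw [chartIndex, dif_pos hex]
    exact huniq y _ _ hex.choose_spec hn
  have hsec : ∀ q ∈ U, chartSec F V x0 q ∈ V ∧ Quot.mk F.zrel (chartSec F V x0 q) = q := by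
    intro q hq
    obtain ⟨v, hv, hpv⟩ := hq
    have hex : ∃ w, w ∈ V ∧ Quot.mk F.zrel w = q := ⟨v, hv, hpv⟩
    rw [chartSec, dif_pos hex]
    exact hex.choose_spec
  have hsec_cont : ContinuousOn (chartSec F V x0) U := by
    rw [continuousOn_iff]
    intro q hq t ht hft
    refine ⟨Quot.mk F.zrel '' (t ∩ V), F.isOpenMap_quot_mk _ (ht.inter hVo), ?_, ?_⟩
    · exact ⟨chartSec F V x0 q, ⟨hft, (hsec q hq).1⟩, (hsec q hq).2⟩
    · rintro q' ⟨⟨w, ⟨hwt, hwV⟩, hwq⟩, hq'U⟩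
      have h1 := hsec q' hq'U
      have h2 : chartSec F V x0 q' = w := hinjV _ h1.1 w hwV (by rw [h1.2, ← hwq])
      simp only [Set.mem_preimage]
      rw [h2]
      exact hwt
  have hind_cont : ContinuousOn (fun y => chartIndex F V y)
      ((Quot.mk F.zrel : E → F.ZQuot) ⁻¹' U) := by
    intro y hy
    have hyV := hind y hy
    have hOo : IsOpen ((fun w => F.act (chartIndex F V y, 0) w) ⁻¹' V) :=
      hVo.preimage (F.act_single_cont _)
    apply ContinuousAt.continuousWithinAt
    have hmem : (fun w => F.act (chartIndex F V y, 0) w) ⁻¹' V ∈ 𝓝 y := hOo.mem_nhds hyV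
    have hev : (fun w => chartIndex F V w) =ᶠ[𝓝 y] fun _ => chartIndex F V y :=
      Filter.eventuallyEq_of_mem hmem fun w hw => hind_eq w _ hw
    exact (continuousAt_congr hev).2 continuousAt_const
  refine ⟨{ toFun := fun y => (Quot.mk F.zrel y, chartIndex F V y),
            invFun := fun z => F.act (-z.2, 0) (chartSec F V x0 z.1),
            source := (Quot.mk F.zrel : E → F.ZQuot) ⁻¹' U,
            target := U ×ˢ Set.univ,
            map_source' := fun y hy => ⟨hy, Set.mem_univ _⟩,
            map_target' := ?_,
            left_inv' := ?_,
            right_inv' := ?_,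
            open_source := hUo.preimage continuous_quot_mk,
            open_target := hUo.prod isOpen_univ,
            continuousOn_toFun := (continuous_quot_mk.continuousOn).prodMk hind_cont,
            continuousOn_invFun := ?_,
            baseSet := U,
            open_baseSet := hUo,
            source_eq := rfl,
            target_eq := rfl,
            proj_toFun := fun y _ => rfl }, ⟨x0, hx0, rfl⟩⟩
  · rintro ⟨q, n⟩ ⟨hq, -⟩
    have h1 := hsec q hq
    show Quot.mk F.zrel (F.act (-n, 0) (chartSec F V x0 q)) ∈ U
    rw [F.quot_mk_act, h1.2]
    exact hq
  · intro y hy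
    have hyV := hind y hy
    have h1 := hsec (Quot.mk F.zrel y) hy
    have h2 : chartSec F V x0 (Quot.mk F.zrel y) = F.act (chartIndex F V y, 0) y :=
      hinjV _ h1.1 _ hyV (by rw [h1.2, F.quot_mk_act])
    show F.act (-(chartIndex F V y), 0) (chartSec F V x0 (Quot.mk F.zrel y)) = y
    rw [h2, F.act_comp,
      show ((-(chartIndex F V y) : ℤ), (0 : ℝ)) + (chartIndex F V y, 0) = 0 by
        simp [Prod.ext_iff], F.act_zero]
  · rintro ⟨q, n⟩ ⟨hq, -⟩
    have h1 := hsec q hq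
    have hfst : Quot.mk F.zrel (F.act (-n, 0) (chartSec F V x0 q)) = q := by
      rw [F.quot_mk_act, h1.2]
    have hsnd : chartIndex F V (F.act (-n, 0) (chartSec F V x0 q)) = n := by
      apply hind_eq
      rw [F.act_comp, show ((n : ℤ), (0 : ℝ)) + (-n, 0) = 0 by simp [Prod.ext_iff], F.act_zero]
      exact h1.1
    exact Prod.ext hfst hsnd
  · have hg : ContinuousOn (fun z : F.ZQuot × ℤ => chartSec F V x0 z.1) (U ×ˢ Set.univ) :=
      hsec_cont.comp continuousOn_fst fun z hz => hz.1
    have hpair : ContinuousOn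
        (fun z : F.ZQuot × ℤ => (((-z.2 : ℤ), (0 : ℝ)), chartSec F V x0 z.1))
        (U ×ˢ Set.univ) := by
      have hdisc : Continuous fun z : F.ZQuot × ℤ => ((-z.2 : ℤ), (0 : ℝ)) := by
        exact (continuous_of_discreteTopology
          (f := fun m : ℤ => ((-m : ℤ), (0 : ℝ)))).comp continuous_snd
      exact hdisc.continuousOn.prodMk hg
    exact F.act_cont.comp_continuousOn hpair

end PreFamily

/-- The quotient by the `ℤ`-action is a covering map. -/
theorem zQuot_coveringMap {S E : Type*} [TopologicalSpace S] [TopologicalSpace E]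
    (F : PreFamily S E) (h1 : F.Q1) (h4 : F.Q4) (h5 : F.Q5) :
    IsCoveringMap (Quot.mk F.zrel : E → F.ZQuot) := by
  intro q
  obtain ⟨x0, rfl⟩ := Quot.exists_rep q
  obtain ⟨V, hVo, hx0, hdisj⟩ := F.exists_good_nbhd h1 h4 h5 x0
  obtain ⟨t, ht⟩ := F.exists_triv x0 V hVo hx0 hdisj
  exact (IsEvenlyCovered.of_trivialization ht).to_isEvenlyCovered_preimage

end
end

section
/- Let π: L_S → S and π': L_S' → S be continuous maps, each equipped with a continuous fiber-preserving ℤ × ℝ-action and a linear order on each fiber, and each satisfying properties (Q1), (Q3), (Q4), and (Q5). Let f: L_S → L_S' be a continuous map with π = π' ∘ f which is bijective and ℝ-equivariant (f(t·x) = t·f(x) for all t ∈ ℝ, x ∈ L_S). Then f is a homeomorphism. -/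
open Topology

noncomputable section

/-! ### Auxiliary lemmas for the main theorem -/

namespace BPAux

section Fiber

variable {L : Type*} [TopologicalSpace L] {D : ParaData L}

lemma act_g_cont (hD : D.IsBrokenParacycle) (g : ℤ × ℝ) : Continuous (D.act g) :=
  hD.act_cont.comp (continuous_const.prodMk continuous_id)

lemma act_leftInv (hD : D.IsBrokenParacycle) (g : ℤ × ℝ) (x : L) :
    D.act (-g) (D.act g x) = x := by
  rw [← hD.act_add, neg_add_cancel, hD.act_zero]

lemma act_inj (hD : D.IsBrokenParacycle) (g : ℤ × ℝ) : Function.Injective (D.act g) := by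
  intro a b hab
  have h := congrArg (D.act (-g)) hab
  rwa [act_leftInv hD, act_leftInv hD] at h

/-- The map realizing `act (1,0)` in coordinates. -/
lemma shift_real (hD : D.IsBrokenParacycle) (φ : L ≃ₜ ℝ)
    (hφ : ∀ x y, D.le x y ↔ φ x ≤ φ y) :
    ∃ k : ℝ → ℝ, Continuous k ∧ StrictMono k ∧ (∀ t, t < k t) ∧
      ∀ w, k (φ w) = φ (D.act (1, 0) w) := by
  set k : ℝ → ℝ := fun t => φ (D.act (1, 0) (φ.symm t)) with hk
  have kc : Continuous k := φ.continuous.comp ((act_g_cont hD _).comp φ.symm.continuous)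
  have ki : Function.Injective k := fun a b hab =>
    φ.symm.injective (act_inj hD _ (φ.injective hab))
  have klt : ∀ t, t < k t := by
    intro t
    have h1 : D.le (φ.symm t) (D.act (1, 0) (φ.symm t)) := hD.z_directed _
    have h2 := (hφ _ _).mp h1
    rw [φ.apply_symm_apply] at h2
    rcases h2.lt_or_eq with h | h
    · exact h
    · exfalso
      have : D.act (1, 0) (φ.symm t) = φ.symm t := φ.injective (by rw [← h, φ.apply_symm_apply])
      exact one_ne_zero (hD.z_free 1 _ this)
  have hmono : StrictMono k := by
    rcases kc.strictMono_of_inj ki with hm | ha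
    · exact hm
    · exfalso
      have h2 := klt (k 0)
      exact absurd (ha (klt 0)) (not_lt.mpr h2.le)
  exact ⟨k, kc, hmono, klt, fun w => by rw [hk]; simp only; rw [φ.symm_apply_apply]⟩

/-- The map realizing `act (-1,0)` in coordinates. -/
lemma shift_real_neg (hD : D.IsBrokenParacycle) (φ : L ≃ₜ ℝ)
    (hφ : ∀ x y, D.le x y ↔ φ x ≤ φ y) :
    ∃ k : ℝ → ℝ, Continuous k ∧ (∀ t, k t < t) ∧
      ∀ w, k (φ w) = φ (D.act (-1, 0) w) := by
  set k : ℝ → ℝ := fun t => φ (D.act (-1, 0) (φ.symm t)) with hk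
  have kc : Continuous k := φ.continuous.comp ((act_g_cont hD _).comp φ.symm.continuous)
  have hinv : ∀ w : L, D.act (1, 0) (D.act (-1, 0) w) = w := by
    intro w
    have := act_leftInv hD (-1, 0) w
    rwa [show -((-1 : ℤ), (0 : ℝ)) = ((1 : ℤ), (0 : ℝ)) by simp [Prod.ext_iff]] at this
  have klt : ∀ t, k t < t := by
    intro t
    have h1 : D.le (D.act (-1, 0) (φ.symm t)) (φ.symm t) := by
      have := hD.z_directed (D.act (-1, 0) (φ.symm t))
      rwa [hinv] at this
    have h2 := (hφ _ _).mp h1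
    rw [φ.apply_symm_apply] at h2
    rcases h2.lt_or_eq with h | h
    · exact h
    · exfalso
      have : D.act (-1, 0) (φ.symm t) = φ.symm t := φ.injective (by rw [h, φ.apply_symm_apply])
      exact absurd (hD.z_free (-1) _ this) (by norm_num)
  exact ⟨k, kc, klt, fun w => by rw [hk]; simp only; rw [φ.symm_apply_apply]⟩

lemma cofinal_up (hD : D.IsBrokenParacycle) (z y : L) :
    ∃ N : ℕ, ¬ D.le (D.act ((N : ℤ), 0) z) y := by
  obtain ⟨φ, hφ⟩ := hD.exists_homeo
  obtain ⟨k, kc, _, klt, hkφ⟩ := shift_real hD φ hφ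
  by_contra hcon
  push_neg at hcon
  set a : ℕ → ℝ := fun n => φ (D.act ((n : ℤ), 0) z) with ha
  have hstep : ∀ n : ℕ, a (n + 1) = k (a n) := by
    intro n
    simp only [ha]
    rw [show (((n + 1 : ℕ)) : ℤ) = 1 + (n : ℤ) by push_cast; ring,
      show ((1 + (n : ℤ)), (0 : ℝ)) = ((1 : ℤ), (0 : ℝ)) + ((n : ℤ), (0 : ℝ)) by
        simp [Prod.ext_iff],
      hD.act_add, hkφ]
  have hmono : Monotone a :=
    monotone_nat_of_le_succ (fun n => by rw [hstep n]; exact (klt (a n)).le)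
  have hbdd : ∀ n, a n ≤ φ y := fun n => (hφ _ _).mp (hcon n)
  rcases tendsto_of_monotone hmono with htop | ⟨l, hl⟩
  · obtain ⟨n, hn⟩ := (Filter.tendsto_atTop.mp htop (φ y + 1)).exists
    linarith [hbdd n]
  · have h1 : Filter.Tendsto (fun n => a (n + 1)) Filter.atTop (nhds l) :=
      hl.comp (Filter.tendsto_add_atTop_nat 1)
    have h2 : Filter.Tendsto (fun n => k (a n)) Filter.atTop (nhds (k l)) :=
      (kc.tendsto l).comp hl
    rw [show (fun n => a (n + 1)) = fun n => k (a n) from funext hstep] at h1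
    exact absurd (tendsto_nhds_unique h1 h2) (ne_of_lt (klt l))

lemma cofinal_down (hD : D.IsBrokenParacycle) (z y : L) :
    ∃ N : ℕ, ¬ D.le y (D.act (-(N : ℤ), 0) z) := by
  obtain ⟨φ, hφ⟩ := hD.exists_homeo
  obtain ⟨k, kc, klt, hkφ⟩ := shift_real_neg hD φ hφ
  by_contra hcon
  push_neg at hcon
  set a : ℕ → ℝ := fun n => φ (D.act (-(n : ℤ), 0) z) with ha
  have hstep : ∀ n : ℕ, a (n + 1) = k (a n) := by
    intro n
    simp only [ha]
    rw [show (-((n + 1 : ℕ) : ℤ)) = -1 + (-(n : ℤ)) by push_cast; ring,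
      show ((-1 + (-(n : ℤ))), (0 : ℝ)) = ((-1 : ℤ), (0 : ℝ)) + ((-(n : ℤ)), (0 : ℝ)) by
        simp [Prod.ext_iff],
      hD.act_add, hkφ]
  have hmono : Antitone a :=
    antitone_nat_of_succ_le (fun n => by rw [hstep n]; exact (klt (a n)).le)
  have hbdd : ∀ n, φ y ≤ a n := fun n => (hφ _ _).mp (hcon n)
  rcases tendsto_of_antitone hmono with htop | ⟨l, hl⟩
  · obtain ⟨n, hn⟩ := (Filter.tendsto_atBot.mp htop (φ y - 1)).exists
    linarith [hbdd n]
  · have h1 : Filter.Tendsto (fun n => a (n + 1)) Filter.atTop (nhds l) :=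
      hl.comp (Filter.tendsto_add_atTop_nat 1)
    have h2 : Filter.Tendsto (fun n => k (a n)) Filter.atTop (nhds (k l)) :=
      (kc.tendsto l).comp hl
    rw [show (fun n => a (n + 1)) = fun n => k (a n) from funext hstep] at h1
    exact absurd (tendsto_nhds_unique h1 h2) (ne_of_gt (klt l))

lemma act_one_mono (hD : D.IsBrokenParacycle) {x y : L} (h : D.le x y) :
    D.le (D.act (1, 0) x) (D.act (1, 0) y) := by
  obtain ⟨φ, hφ⟩ := hD.exists_homeo
  obtain ⟨k, _, hm, _, hkφ⟩ := shift_real hD φ hφ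
  rw [hφ] at h ⊢
  rw [← hkφ, ← hkφ]
  exact hm.le_iff_le.mpr h

lemma mem_rFixed_of_act_one (hD : D.IsBrokenParacycle) {p : L}
    (hp : D.act (0, 1) p = p) : p ∈ D.rFixed := by
  obtain ⟨φ, hφ⟩ := hD.exists_homeo
  have hanti : ∀ a b : L, D.le a b → D.le b a → a = b := fun a b h h' =>
    φ.injective (le_antisymm ((hφ _ _).mp h) ((hφ _ _).mp h'))
  have hnat : ∀ m : ℕ, D.act (0, (m : ℝ)) p = p := by
    intro m
    induction m with
    | zero =>
      have h0 := hD.act_zero p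
      rw [show (0 : ℤ × ℝ) = (0, 0) from rfl] at h0
      simpa using h0
    | succ n ih =>
      have h0 : ((0 : ℤ), ((n : ℝ) + 1)) = ((0 : ℤ), (1 : ℝ)) + ((0 : ℤ), (n : ℝ)) := by
        simp [Prod.ext_iff]
        ring
      push_cast
      rw [h0, hD.act_add, ih, hp]
  have hr : ∀ r : ℝ, 0 ≤ r → D.act (0, r) p = p := by
    intro r hr0
    obtain ⟨m, hm⟩ := exists_nat_ge r
    have key : D.act (0, (m : ℝ) - r) (D.act (0, r) p) = p := by
      rw [← hD.act_add, show ((0 : ℤ), (m : ℝ) - r) + ((0 : ℤ), r) = ((0 : ℤ), (m : ℝ)) by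
        simp [Prod.ext_iff], hnat m]
    have h1 : D.le (D.act (0, r) p) p := by
      have := hD.r_directed ((m : ℝ) - r) (by linarith) (D.act (0, r) p)
      rwa [key] at this
    exact hanti _ _ h1 (hD.r_directed r hr0 p)
  intro t
  rcases le_or_gt 0 t with ht | ht
  · exact hr t ht
  · have h1 : D.act (0, -t) p = p := hr (-t) (by linarith)
    have h2 := congrArg (D.act (0, t)) h1
    rw [← hD.act_add, show ((0 : ℤ), t) + ((0 : ℤ), -t) = (0 : ℤ × ℝ) by simp [Prod.ext_iff],
      hD.act_zero] at h2
    exact h2.symm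

lemma pick (hD : D.IsBrokenParacycle) (x : L) (V : Set L) (hV : IsOpen V) (hx : x ∈ V) :
    ∃ p q : L, D.le p x ∧ D.le x q ∧ p ≠ x ∧ q ≠ x ∧ p ∉ D.rFixed ∧ q ∉ D.rFixed ∧
      ∀ y, D.le p y → D.le y q → y ∈ V := by
  obtain ⟨φ, hφ⟩ := hD.exists_homeo
  haveI : T2Space L := φ.symm.t2Space
  have hFc : IsClosed D.rFixed := by
    have hset : D.rFixed = ⋂ t : ℝ, {w | D.act (0, t) w = w} := by
      ext w; simp [ParaData.rFixed, Set.mem_iInter]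
    rw [hset]
    exact isClosed_iInter fun t => isClosed_eq (act_g_cont hD _) continuous_id
  obtain ⟨O, hOo, hxO, hOF⟩ : ∃ O, IsOpen O ∧ x ∈ O ∧ ∀ w ∈ O ∩ D.rFixed, w = x := by
    by_cases hxf : x ∈ D.rFixed
    · haveI := hD.fixed_discrete
      obtain ⟨O, hOo, hOeq⟩ := isOpen_induced_iff.mp
        (isOpen_discrete ({⟨x, hxf⟩} : Set D.rFixed))
      refine ⟨O, hOo, ?_, ?_⟩
      · have h0 : (⟨x, hxf⟩ : D.rFixed) ∈ Subtype.val ⁻¹' O := by rw [hOeq]; rfl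
        exact h0
      · rintro w ⟨hwO, hwF⟩
        have h0 : (⟨w, hwF⟩ : D.rFixed) ∈ Subtype.val ⁻¹' O := hwO
        rw [hOeq] at h0
        exact congrArg Subtype.val h0
    · exact ⟨D.rFixedᶜ, hFc.isOpen_compl, hxf, fun w hw => absurd hw.2 hw.1⟩
  have hW2o : IsOpen (O ∩ V) := hOo.inter hV
  have hxW2 : x ∈ O ∩ V := ⟨hxO, hx⟩
  obtain ⟨ε, hε, hball⟩ := Metric.isOpen_iff.mp (φ.isOpenMap _ hW2o) (φ x) ⟨x, hxW2, rfl⟩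
  have hmem : ∀ r : ℝ, |r - φ x| < ε → φ.symm r ∈ O ∩ V := by
    intro r hr
    obtain ⟨w, hw, hwr⟩ := hball (show r ∈ Metric.ball (φ x) ε by simpa [Real.dist_eq] using hr)
    rwa [← hwr, φ.symm_apply_apply]
  have hp2 : |φ x - ε / 2 - φ x| < ε := by
    rw [show φ x - ε / 2 - φ x = -(ε / 2) by ring, abs_neg, abs_of_pos (by linarith)]
    linarith
  have hq2 : |φ x + ε / 2 - φ x| < ε := by
    rw [show φ x + ε / 2 - φ x = ε / 2 by ring, abs_of_pos (by linarith)]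
    linarith
  have hpW2 : φ.symm (φ x - ε / 2) ∈ O ∩ V := hmem _ hp2
  have hqW2 : φ.symm (φ x + ε / 2) ∈ O ∩ V := hmem _ hq2
  refine ⟨φ.symm (φ x - ε / 2), φ.symm (φ x + ε / 2), ?_, ?_, ?_, ?_, ?_, ?_, ?_⟩
  · rw [hφ, φ.apply_symm_apply]; linarith
  · rw [hφ, φ.apply_symm_apply]; linarith
  · intro h
    have := congrArg φ h
    rw [φ.apply_symm_apply] at this
    linarith
  · intro h
    have := congrArg φ h
    rw [φ.apply_symm_apply] at this
    linarith
  · intro hpf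
    have hpx := hOF _ ⟨hpW2.1, hpf⟩
    have := congrArg φ hpx
    rw [φ.apply_symm_apply] at this
    linarith
  · intro hqf
    have hqx := hOF _ ⟨hqW2.1, hqf⟩
    have := congrArg φ hqx
    rw [φ.apply_symm_apply] at this
    linarith
  · intro y h1 h2
    rw [hφ, φ.apply_symm_apply] at h1
    rw [hφ, φ.apply_symm_apply] at h2
    have : φ.symm (φ y) ∈ O ∩ V := by
      apply hmem
      rw [abs_sub_lt_iff]
      constructor <;> linarith
    rw [φ.symm_apply_apply] at this
    exact this.2

end Fiber

section Family

variable {S E : Type*} [TopologicalSpace S] [TopologicalSpace E] (F : PreFamily S E)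

lemma act_act (a b : ℤ) (x : E) : F.act (a, 0) (F.act (b, 0) x) = F.act (a + b, 0) x := by
  rw [← F.act_add]
  congr 1
  simp [Prod.ext_iff]

lemma act_injE (g : ℤ × ℝ) : Function.Injective (F.act g) := by
  intro a b hab
  have h := congrArg (F.act (-g)) hab
  rwa [← F.act_add, ← F.act_add, neg_add_cancel, F.act_zero, F.act_zero] at h

lemma act_neg_act (n : ℤ) (x : E) : F.act (-n, 0) (F.act (n, 0) x) = x := by
  rw [act_act, neg_add_cancel]
  exact F.act_zero x

lemma fle_act_one (hq1 : F.Q1) (y : E) : F.fle y (F.act (1, 0) y) :=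
  (hq1 (F.π y)).z_directed ⟨y, rfl⟩

lemma fle_act_nonneg (hq1 : F.Q1) : ∀ m : ℕ, ∀ y : E, F.fle y (F.act ((m : ℤ), 0) y) := by
  intro m
  induction m with
  | zero =>
    intro y
    rw [show (((0 : ℕ) : ℤ), (0 : ℝ)) = (0 : ℤ × ℝ) by norm_num [Prod.ext_iff], F.act_zero]
    exact F.fle_refl y
  | succ n ih =>
    intro y
    rw [show (((n + 1 : ℕ)) : ℤ) = 1 + (n : ℤ) by push_cast; ring, ← act_act]
    exact F.fle_trans _ _ _ (ih y) (fle_act_one F hq1 _)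

lemma fle_act_zle (hq1 : F.Q1) (m n : ℤ) (h : m ≤ n) (z : E) :
    F.fle (F.act (m, 0) z) (F.act (n, 0) z) := by
  have h0 := fle_act_nonneg F hq1 (n - m).toNat (F.act (m, 0) z)
  rwa [act_act, show (((n - m).toNat : ℤ)) + m = n by omega] at h0

lemma fle_act_one_mono (hq1 : F.Q1) {y z : E} (h : F.fle y z) :
    F.fle (F.act (1, 0) y) (F.act (1, 0) z) := by
  have hyz := F.fle_fiber _ _ h
  exact act_one_mono (hq1 (F.π z)) (x := ⟨y, hyz⟩) (y := ⟨z, rfl⟩) h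

lemma actZ_mono (hq1 : F.Q1) (n : ℤ) {y z : E} (h : F.fle y z) :
    F.fle (F.act (n, 0) y) (F.act (n, 0) z) := by
  have hnn : ∀ (m : ℕ) (y z : E), F.fle y z →
      F.fle (F.act ((m : ℤ), 0) y) (F.act ((m : ℤ), 0) z) := by
    intro m
    induction m with
    | zero =>
      intro y z h
      rwa [show (((0 : ℕ) : ℤ), (0 : ℝ)) = (0 : ℤ × ℝ) by norm_num [Prod.ext_iff],
        F.act_zero, F.act_zero]
    | succ m ih =>
      intro y z h
      rw [show (((m + 1 : ℕ)) : ℤ) = 1 + (m : ℤ) by push_cast; ring, ← act_act, ← act_act]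
      exact fle_act_one_mono F hq1 (ih y z h)
  rcases le_or_gt 0 n with hn | hn
  · have h2 := hnn n.toNat y z h
    rwa [show ((n.toNat : ℤ)) = n by omega] at h2
  · by_cases hzz : F.fle (F.act (n, 0) y) (F.act (n, 0) z)
    · exact hzz
    · have hπ : F.π (F.act (n, 0) y) = F.π (F.act (n, 0) z) := by
        rw [F.act_fiber, F.act_fiber]
        exact F.fle_fiber _ _ h
      rcases F.fle_total _ _ hπ with hc | hc
      · exact hc
      · have h2 := hnn (-n).toNat _ _ hc
        rw [show (((-n).toNat : ℤ)) = -n by omega, act_neg_act, act_neg_act] at h2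
        rw [F.fle_antisymm _ _ h h2]
        exact F.fle_refl _

lemma cofinal_up' (hq1 : F.Q1) (z y : E) (hzy : F.π z = F.π y) :
    ∃ N : ℕ, ¬ F.fle (F.act ((N : ℤ), 0) z) y :=
  cofinal_up (hq1 (F.π y)) ⟨z, hzy⟩ ⟨y, rfl⟩

lemma cofinal_down' (hq1 : F.Q1) (z y : E) (hzy : F.π z = F.π y) :
    ∃ N : ℕ, ¬ F.fle y (F.act (-(N : ℤ), 0) z) :=
  cofinal_down (hq1 (F.π y)) ⟨z, hzy⟩ ⟨y, rfl⟩

lemma open_not_above (h4 : F.Q4) {U : Set S} (hU : IsOpen U) (τ : ↥U → E)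
    (hτc : Continuous τ) (hτs : ∀ u, F.π (τ u) = (u : S)) :
    IsOpen {y : E | ∃ h : F.π y ∈ U, ¬ F.fle (τ ⟨F.π y, h⟩) y} := by
  have hPU : IsOpen (F.π ⁻¹' U) := hU.preimage F.π_cont
  set Ψ : ↥(F.π ⁻¹' U) → ↥F.fibProd := fun z =>
    ⟨(τ ⟨F.π z.1, z.2⟩, z.1), hτs _⟩ with hΨ
  have hΨc : Continuous Ψ := by
    apply Continuous.subtype_mk
    exact (hτc.comp ((F.π_cont.comp continuous_subtype_val).subtype_mk _)).prodMk
      continuous_subtype_val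
  have hcl : IsClosed (Ψ ⁻¹' {p : ↥F.fibProd | F.fle p.1.1 p.1.2}) := h4.preimage hΨc
  have himg : {y : E | ∃ h : F.π y ∈ U, ¬ F.fle (τ ⟨F.π y, h⟩) y} =
      Subtype.val '' (Ψ ⁻¹' {p : ↥F.fibProd | F.fle p.1.1 p.1.2})ᶜ := by
    ext y
    constructor
    · rintro ⟨h, hn⟩
      exact ⟨⟨y, h⟩, hn, rfl⟩
    · rintro ⟨⟨y', h⟩, hn, rfl⟩
      exact ⟨h, hn⟩
  rw [himg]
  exact hPU.isOpenMap_subtype_val _ hcl.isOpen_compl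

lemma open_not_below (h4 : F.Q4) {U : Set S} (hU : IsOpen U) (τ : ↥U → E)
    (hτc : Continuous τ) (hτs : ∀ u, F.π (τ u) = (u : S)) :
    IsOpen {y : E | ∃ h : F.π y ∈ U, ¬ F.fle y (τ ⟨F.π y, h⟩)} := by
  have hPU : IsOpen (F.π ⁻¹' U) := hU.preimage F.π_cont
  set Ψ : ↥(F.π ⁻¹' U) → ↥F.fibProd := fun z =>
    ⟨(z.1, τ ⟨F.π z.1, z.2⟩), (hτs ⟨F.π z.1, z.2⟩).symm⟩ with hΨ
  have hΨc : Continuous Ψ := by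
    apply Continuous.subtype_mk
    exact continuous_subtype_val.prodMk
      (hτc.comp ((F.π_cont.comp continuous_subtype_val).subtype_mk _))
  have hcl : IsClosed (Ψ ⁻¹' {p : ↥F.fibProd | F.fle p.1.1 p.1.2}) := h4.preimage hΨc
  have himg : {y : E | ∃ h : F.π y ∈ U, ¬ F.fle y (τ ⟨F.π y, h⟩)} =
      Subtype.val '' (Ψ ⁻¹' {p : ↥F.fibProd | F.fle p.1.1 p.1.2})ᶜ := by
    ext y
    constructor
    · rintro ⟨h, hn⟩
      exact ⟨⟨y, h⟩, hn, rfl⟩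
    · rintro ⟨⟨y', h⟩, hn, rfl⟩
      exact ⟨h, hn⟩
  rw [himg]
  exact hPU.isOpenMap_subtype_val _ hcl.isOpen_compl

end Family

section Iso

variable {S E E' : Type*} [TopologicalSpace S] [TopologicalSpace E] [TopologicalSpace E']

/-- `f` is a fiberwise order isomorphism. -/
lemma fle_iff (F : PreFamily S E) (F' : PreFamily S E') (h1 : F.Q1) (h1' : F'.Q1)
    (f : E → E') (hcomm : ∀ x, F'.π (f x) = F.π x) (hf : Continuous f)
    (hinj : Function.Injective f)
    (heq : ∀ (t : ℝ) (x : E), f (F.act (0, t) x) = F'.act (0, t) (f x)) :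
    ∀ y z : E, F.π y = F.π z → (F.fle y z ↔ F'.fle (f y) (f z)) := by
  intro y z hyz
  set s := F.π z with hs
  set D := F.fiberData s with hD
  set D' := F'.fiberData s with hD'
  have hB := h1 s
  have hB' := h1' s
  obtain ⟨φ, hφ⟩ := hB.exists_homeo
  obtain ⟨φ', hφ'⟩ := hB'.exists_homeo
  set Fmap : {w : E // F.π w = s} → {w : E' // F'.π w = s} :=
    fun w => ⟨f w.1, by rw [hcomm]; exact w.2⟩ with hFmap
  have hFc : Continuous Fmap := (hf.comp continuous_subtype_val).subtype_mk _
  have hFi : Function.Injective Fmap := fun a b h =>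
    Subtype.ext (hinj (congrArg Subtype.val h))
  set k : ℝ → ℝ := fun t => φ' (Fmap (φ.symm t)) with hk
  have kc : Continuous k := φ'.continuous.comp (hFc.comp φ.symm.continuous)
  have ki : Function.Injective k := fun a b h =>
    φ.symm.injective (hFi (φ'.injective h))
  have hmono : StrictMono k := by
    rcases kc.strictMono_of_inj ki with hm | ha
    · exact hm
    · exfalso
      obtain ⟨pt, -, -, -, -, -, hpnf, -, -⟩ :=
        pick hB (⟨z, rfl⟩ : {w : E // F.π w = s}) Set.univ isOpen_univ (Set.mem_univ _)
      set qt := D.act (0, 1) pt with hqt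
      have hne : qt ≠ pt := fun hq => hpnf (mem_rFixed_of_act_one hB hq)
      have hPQ : φ pt < φ qt := by
        rcases ((hφ _ _).mp (hB.r_directed 1 zero_le_one pt)).lt_or_eq with h | h
        · exact h
        · exact absurd (φ.injective h).symm hne
      have hlt := ha hPQ
      have hle : φ' (Fmap pt) ≤ φ' (Fmap qt) := by
        have hact : Fmap qt = D'.act (0, 1) (Fmap pt) := Subtype.ext (heq 1 pt.1)
        rw [hact]
        exact (hφ' _ _).mp (hB'.r_directed 1 zero_le_one _)
      rw [show k (φ pt) = φ' (Fmap pt) by rw [hk]; simp only; rw [φ.symm_apply_apply]] at hlt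
      rw [show k (φ qt) = φ' (Fmap qt) by rw [hk]; simp only; rw [φ.symm_apply_apply]] at hlt
      exact absurd hle (not_le.mpr hlt)
  have hkey : ∀ w : {w : E // F.π w = s}, k (φ w) = φ' (Fmap w) := by
    intro w
    rw [hk]
    simp only
    rw [φ.symm_apply_apply]
  constructor
  · intro h
    have h0 : D.le ⟨y, hyz⟩ ⟨z, rfl⟩ := h
    have h2 := hmono.le_iff_le.mpr ((hφ _ _).mp h0)
    rw [hkey, hkey] at h2
    exact (hφ' (Fmap ⟨y, hyz⟩) (Fmap ⟨z, rfl⟩)).mpr h2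
  · intro h
    have h0 : D'.le (Fmap ⟨y, hyz⟩) (Fmap ⟨z, rfl⟩) := h
    have h2 := (hφ' _ _).mp h0
    rw [← hkey, ← hkey] at h2
    exact (hφ (⟨y, hyz⟩ : {w : E // F.π w = s}) ⟨z, rfl⟩).mpr (hmono.le_iff_le.mp h2)

end Iso

end BPAux

/-- A continuous fiberwise bijective `ℝ`-equivariant map of families over the
same base is a homeomorphism. -/
theorem rEquivariant_bijection_isHomeomorph {S E E' : Type*}
    [TopologicalSpace S] [TopologicalSpace E] [TopologicalSpace E']
    (F : PreFamily S E) (F' : PreFamily S E')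
    (h1 : F.Q1) (h3 : F.Q3) (h4 : F.Q4) (h5 : F.Q5)
    (h1' : F'.Q1) (h3' : F'.Q3) (h4' : F'.Q4) (h5' : F'.Q5)
    (f : E → E') (hcomm : ∀ x, F'.π (f x) = F.π x)
    (hf : Continuous f) (hbij : Function.Bijective f)
    (heq : ∀ (t : ℝ) (x : E), f (F.act (0, t) x) = F'.act (0, t) (f x)) :
    IsHomeomorph f := by
  have hinj := hbij.1
  have hiso := BPAux.fle_iff F F' h1 h1' f hcomm hf hinj heq
  refine ⟨hf, ?_, hbij⟩
  intro W hW
  rw [isOpen_iff_forall_mem_open]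
  rintro x' ⟨x, hxW, rfl⟩
  -- pick a fiberwise interval [p, q] around x inside W, with p, q not ℝ-fixed
  obtain ⟨p', q', hpx, hxq, hpne, hqne, hpnf, hqnf, hint⟩ :=
    BPAux.pick (h1 (F.π x)) (⟨x, rfl⟩ : {w : E // F.π w = F.π x}) (Subtype.val ⁻¹' W)
      (hW.preimage continuous_subtype_val) hxW
  obtain ⟨p, hpfib⟩ := p'
  obtain ⟨q, hqfib⟩ := q'
  have hpx' : F.fle p x := hpx
  have hxq' : F.fle x q := hxq
  have hpnex : p ≠ x := fun h => hpne (Subtype.ext h)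
  have hqnex : q ≠ x := fun h => hqne (Subtype.ext h)
  have hpnf' : p ∉ F.rFixed := fun hc => hpnf (fun t => Subtype.ext (hc t))
  have hqnf' : q ∉ F.rFixed := fun hc => hqnf (fun t => Subtype.ext (hc t))
  have hint' : ∀ y, F.π y = F.π x → F.fle p y → F.fle y q → y ∈ W := by
    intro y hy hy1 hy2
    exact hint ⟨y, hy⟩ hy1 hy2
  -- sections through p and q
  obtain ⟨Up, hUpo, hUps, σp, hσpc, hσps, -, hσppin⟩ := h5 p hpnf'
  obtain ⟨Uq, hUqo, hUqs, σq, hσqc, hσqs, -, hσqpin⟩ := h5 q hqnf'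
  set U : Set S := Up ∩ Uq with hU_def
  have hUo : IsOpen U := hUpo.inter hUqo
  have hsU : F.π x ∈ U := ⟨hpfib ▸ hUps, hqfib ▸ hUqs⟩
  set σP : ↥U → E := fun u => σp ⟨u.1, u.2.1⟩ with hσP
  set σQ : ↥U → E := fun u => σq ⟨u.1, u.2.2⟩ with hσQ
  have hσPc : Continuous σP := hσpc.comp (continuous_subtype_val.subtype_mk _)
  have hσQc : Continuous σQ := hσqc.comp (continuous_subtype_val.subtype_mk _)
  have hσPs : ∀ u : ↥U, F.π (σP u) = (u : S) := fun u => hσps _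
  have hσQs : ∀ u : ↥U, F.π (σQ u) = (u : S) := fun u => hσqs _
  have hσPpin : ∀ u : ↥U, (u : S) = F.π x → σP u = p :=
    fun u hu => hσppin _ (hu.trans hpfib.symm)
  have hσQpin : ∀ u : ↥U, (u : S) = F.π x → σQ u = q :=
    fun u hu => hσqpin _ (hu.trans hqfib.symm)
  set PU : Set E := F.π ⁻¹' U with hPU_def
  have hPUo : IsOpen PU := hUo.preimage F.π_cont
  -- the bad set K and its ℤ-saturation
  set K : Set E := {y | ∃ h : F.π y ∈ U,
    F.fle (σP ⟨F.π y, h⟩) y ∧ F.fle y (σQ ⟨F.π y, h⟩) ∧ y ∉ W} with hK_def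
  have hPUKopen : IsOpen (PU \ K) := by
    have hrepr : PU \ K = ({y : E | ∃ h : F.π y ∈ U, ¬ F.fle (σP ⟨F.π y, h⟩) y} ∪
        {y : E | ∃ h : F.π y ∈ U, ¬ F.fle y (σQ ⟨F.π y, h⟩)}) ∪ (PU ∩ W) := by
      ext y
      constructor
      · rintro ⟨hyPU, hyK⟩
        by_cases h1a : F.fle (σP ⟨F.π y, hyPU⟩) y
        · by_cases h2a : F.fle y (σQ ⟨F.π y, hyPU⟩)
          · by_cases h3a : y ∈ W
            · exact Or.inr ⟨hyPU, h3a⟩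
            · exact absurd (⟨hyPU, h1a, h2a, h3a⟩ : y ∈ K) hyK
          · exact Or.inl (Or.inr ⟨hyPU, h2a⟩)
        · exact Or.inl (Or.inl ⟨hyPU, h1a⟩)
      · rintro ((⟨h, hn⟩ | ⟨h, hn⟩) | ⟨h1a, h2a⟩)
        · exact ⟨h, fun hK => hn hK.choose_spec.1⟩
        · exact ⟨h, fun hK => hn hK.choose_spec.2.1⟩
        · exact ⟨h1a, fun hK => hK.choose_spec.2.2 h2a⟩
    rw [hrepr]
    exact ((BPAux.open_not_above F h4 hUo σP hσPc hσPs).union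
      (BPAux.open_not_below F h4 hUo σQ hσQc hσQs)).union (hPUo.inter hW)
  set satK : Set E := ⋃ n : ℤ, F.act (n, 0) '' K with hsatK_def
  have hactOpen : ∀ g : ℤ × ℝ, IsOpenMap (F.act g) := by
    intro g
    have hcont : ∀ g' : ℤ × ℝ, Continuous (F.act g') := fun g' =>
      F.act_cont.comp (continuous_const.prodMk continuous_id)
    exact (Homeomorph.mk
      ⟨F.act g, F.act (-g),
        fun y => by rw [← F.act_add, neg_add_cancel, F.act_zero],
        fun y => by rw [← F.act_add, add_neg_cancel, F.act_zero]⟩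
      (hcont g) (hcont (-g))).isOpenMap
  have hactPU : ∀ n : ℤ, F.act (n, 0) '' PU = PU := by
    intro n
    ext y
    constructor
    · rintro ⟨w, hw, rfl⟩
      simpa [hPU_def, F.act_fiber] using hw
    · intro hy
      refine ⟨F.act (-n, 0) y, ?_, ?_⟩
      · simpa [hPU_def, F.act_fiber] using hy
      · rw [BPAux.act_act, add_neg_cancel]
        exact F.act_zero y
  have hKn_open : ∀ n : ℤ, IsOpen (PU \ F.act (n, 0) '' K) := by
    intro n
    have hrepr : PU \ F.act (n, 0) '' K = F.act (n, 0) '' (PU \ K) := by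
      rw [Set.image_diff (BPAux.act_injE F (n, 0)), hactPU]
    rw [hrepr]
    exact hactOpen (n, 0) _ hPUKopen
  have hsatK_open : IsOpen (PU \ satK) := by
    rw [isOpen_iff_forall_mem_open]
    rintro y0 ⟨hy0PU, hy0n⟩
    have hy0U : F.π y0 ∈ U := hy0PU
    obtain ⟨N1, hN1⟩ := BPAux.cofinal_up' F h1 (σP ⟨F.π y0, hy0U⟩) y0 (hσPs _)
    obtain ⟨N2, hN2⟩ := BPAux.cofinal_down' F h1 (σQ ⟨F.π y0, hy0U⟩) y0 (hσQs _)
    set N : ℕ := max N1 N2 with hN_def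
    have hN1' : ¬ F.fle (F.act ((N : ℤ), 0) (σP ⟨F.π y0, hy0U⟩)) y0 := by
      intro hcon
      exact hN1 (F.fle_trans _ _ _
        (BPAux.fle_act_zle F h1 _ _ (by exact_mod_cast le_max_left N1 N2) _) hcon)
    have hN2' : ¬ F.fle y0 (F.act (-(N : ℤ), 0) (σQ ⟨F.π y0, hy0U⟩)) := by
      intro hcon
      refine hN2 (F.fle_trans _ _ _ hcon (BPAux.fle_act_zle F h1 _ _ ?_ _))
      have : N2 ≤ N := le_max_right N1 N2
      omega
    refine ⟨({y : E | ∃ h : F.π y ∈ U, ¬ F.fle (F.act ((N : ℤ), 0) (σP ⟨F.π y, h⟩)) y} ∩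
        {y : E | ∃ h : F.π y ∈ U, ¬ F.fle y (F.act (-(N : ℤ), 0) (σQ ⟨F.π y, h⟩))}) ∩
        ⋂ n ∈ Finset.Ioo (-(N : ℤ)) (N : ℤ), (PU \ F.act (n, 0) '' K), ?_, ?_, ?_⟩
    · rintro w ⟨⟨⟨hwU, hwP⟩, ⟨hwU2, hwQ⟩⟩, hwI⟩
      refine ⟨hwU, ?_⟩
      intro hws
      simp only [hsatK_def, Set.mem_iUnion] at hws
      obtain ⟨n, k, hkK, hkw⟩ := hws
      obtain ⟨hkU, hk1, hk2, hk3⟩ := hkK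
      have hπwk : F.π w = F.π k := by rw [← hkw, F.act_fiber]
      have harg : (⟨F.π k, hkU⟩ : ↥U) = ⟨F.π w, hwU⟩ := Subtype.ext hπwk.symm
      have hb1 := BPAux.actZ_mono F h1 n hk1
      rw [harg, hkw] at hb1
      have hb2 := BPAux.actZ_mono F h1 n hk2
      rw [harg, hkw] at hb2
      rcases lt_or_ge n (N : ℤ) with hnN | hnN
      · rcases lt_or_ge (-(N : ℤ)) n with hNn | hNn
        · have hmem := Set.mem_iInter₂.mp hwI n (by simp [Finset.mem_Ioo]; exact ⟨hNn, hnN⟩)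
          exact hmem.2 ⟨k, ⟨hkU, hk1, hk2, hk3⟩, hkw⟩
        · exact hwQ (F.fle_trans _ _ _ hb2 (BPAux.fle_act_zle F h1 _ _ hNn _))
      · exact hwP (F.fle_trans _ _ _ (BPAux.fle_act_zle F h1 _ _ hnN _) hb1)
    · refine ((BPAux.open_not_above F h4 hUo (fun u => F.act ((N : ℤ), 0) (σP u))
          ((F.act_cont.comp (continuous_const.prodMk continuous_id)).comp hσPc)
          (fun u => by rw [F.act_fiber]; exact hσPs u)).inter
        (BPAux.open_not_below F h4 hUo (fun u => F.act (-(N : ℤ), 0) (σQ u))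
          ((F.act_cont.comp (continuous_const.prodMk continuous_id)).comp hσQc)
          (fun u => by rw [F.act_fiber]; exact hσQs u))).inter
        (isOpen_biInter_finset fun n _ => hKn_open n)
    · refine ⟨⟨⟨hy0U, hN1'⟩, ⟨hy0U, hN2'⟩⟩, Set.mem_iInter₂.mpr fun n hn => ⟨hy0PU, ?_⟩⟩
      intro hc
      exact hy0n (Set.mem_iUnion.mpr ⟨n, hc⟩)
  -- pass to the quotient
  have hzrel_equiv : Equivalence F.zrel := by
    constructor
    · intro y
      exact ⟨0, F.act_zero y⟩
    · rintro y z ⟨n, rfl⟩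
      refine ⟨-n, ?_⟩
      rw [BPAux.act_act, neg_add_cancel]
      exact F.act_zero y
    · rintro y z w ⟨n, rfl⟩ ⟨m, rfl⟩
      exact ⟨m + n, (BPAux.act_act F m n y).symm⟩
  have hqmk : ∀ a b : E, Quot.mk F.zrel a = Quot.mk F.zrel b ↔ F.zrel a b := by
    intro a b
    rw [Quot.eq]
    exact hzrel_equiv.eqvGen_iff
  have hqpre : Quot.mk F.zrel ⁻¹' (Quot.mk F.zrel '' K) = satK := by
    ext y
    simp only [Set.mem_preimage, Set.mem_image, hsatK_def, Set.mem_iUnion]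
    constructor
    · rintro ⟨k, hkK, hqk⟩
      obtain ⟨n, rfl⟩ := (hqmk k y).mp hqk
      exact ⟨n, k, hkK, rfl⟩
    · rintro ⟨n, k, hkK, rfl⟩
      exact ⟨k, hkK, Quot.sound ⟨n, rfl⟩⟩
  have hqK_open : IsOpen ((F.qπ ⁻¹' U) \ Quot.mk F.zrel '' K) := by
    apply (isQuotientMap_quot_mk (r := F.zrel)).isOpen_preimage.mp
    have hpre : Quot.mk F.zrel ⁻¹' ((F.qπ ⁻¹' U) \ Quot.mk F.zrel '' K) = PU \ satK := by
      rw [Set.preimage_diff, hqpre]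
      rfl
    rw [← hpre] at hsatK_open
    exact hsatK_open
  have hDcl : IsClosed (F.qπ '' closure (Quot.mk F.zrel '' K)) := h3 _ isClosed_closure
  set U' : Set S := U ∩ (F.qπ '' closure (Quot.mk F.zrel '' K))ᶜ with hU'_def
  have hU'o : IsOpen U' := hUo.inter hDcl.isOpen_compl
  have hπK_sub : ∀ y ∈ K, F.π y ∈ F.qπ '' closure (Quot.mk F.zrel '' K) := fun y hy =>
    ⟨Quot.mk F.zrel y, subset_closure ⟨y, hy, rfl⟩, rfl⟩
  have hsU' : F.π x ∈ U' := by
    refine ⟨hsU, ?_⟩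
    rintro ⟨b, hbB, hbs⟩
    have hbU : b ∈ F.qπ ⁻¹' U := by
      rw [Set.mem_preimage, hbs]
      exact hsU
    have hbK : b ∈ Quot.mk F.zrel '' K := by
      by_contra hbn
      obtain ⟨c, ⟨-, hcn⟩, hcK⟩ := mem_closure_iff.mp hbB _ hqK_open ⟨hbU, hbn⟩
      exact hcn hcK
    obtain ⟨k, hkK, hkb⟩ := hbK
    obtain ⟨hkU, hk1, hk2, hk3⟩ := hkK
    have hks : F.π k = F.π x := by rw [← hbs, ← hkb]; rfl
    apply hk3
    apply hint' k hks
    · rw [hσPpin ⟨F.π k, hkU⟩ hks] at hk1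
      exact hk1
    · rw [hσQpin ⟨F.π k, hkU⟩ hks] at hk2
      exact hk2
  -- the open neighborhood of f x inside f '' W
  set σP' : ↥U' → E' := fun u => f (σP ⟨u.1, u.2.1⟩) with hσP'
  set σQ' : ↥U' → E' := fun u => f (σQ ⟨u.1, u.2.1⟩) with hσQ'
  have hσP'c : Continuous σP' := hf.comp (hσPc.comp (continuous_subtype_val.subtype_mk _))
  have hσQ'c : Continuous σQ' := hf.comp (hσQc.comp (continuous_subtype_val.subtype_mk _))
  have hσP's : ∀ u : ↥U', F'.π (σP' u) = (u : S) := fun u => (hcomm _).trans (hσPs _)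
  have hσQ's : ∀ u : ↥U', F'.π (σQ' u) = (u : S) := fun u => (hcomm _).trans (hσQs _)
  refine ⟨{y' : E' | ∃ h : F'.π y' ∈ U', ¬ F'.fle y' (σP' ⟨F'.π y', h⟩)} ∩
      {y' : E' | ∃ h : F'.π y' ∈ U', ¬ F'.fle (σQ' ⟨F'.π y', h⟩) y'}, ?_, ?_, ?_⟩
  · -- contained in f '' W
    rintro y' ⟨⟨hy'U, hy'P⟩, ⟨hy'U2, hy'Q⟩⟩
    obtain ⟨y, rfl⟩ := hbij.2 y'
    have hyU' : F.π y ∈ U' := by rw [← hcomm y]; exact hy'U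
    have hyU : F.π y ∈ U := hyU'.1
    have hsubeq : (⟨F'.π (f y), hy'U⟩ : ↥U') = ⟨F.π y, hyU'⟩ := Subtype.ext (hcomm y)
    rw [hsubeq] at hy'P
    rw [(Subtype.ext (hcomm y) : (⟨F'.π (f y), hy'U2⟩ : ↥U') = ⟨F.π y, hyU'⟩)] at hy'Q
    have hP2 : ¬ F.fle y (σP ⟨F.π y, hyU⟩) := fun hc =>
      hy'P ((hiso y _ (hσPs ⟨F.π y, hyU⟩).symm).mp hc)
    have hQ2 : ¬ F.fle (σQ ⟨F.π y, hyU⟩) y := fun hc =>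
      hy'Q ((hiso _ y (hσQs ⟨F.π y, hyU⟩)).mp hc)
    have hfleP : F.fle (σP ⟨F.π y, hyU⟩) y := by
      rcases F.fle_total y (σP ⟨F.π y, hyU⟩) (hσPs ⟨F.π y, hyU⟩).symm with hc | hc
      · exact absurd hc hP2
      · exact hc
    have hfleQ : F.fle y (σQ ⟨F.π y, hyU⟩) := by
      rcases F.fle_total (σQ ⟨F.π y, hyU⟩) y (hσQs ⟨F.π y, hyU⟩) with hc | hc
      · exact absurd hc hQ2
      · exact hc
    have hyW : y ∈ W := by
      by_contra hyn
      exact hyU'.2 (hπK_sub y ⟨hyU, hfleP, hfleQ, hyn⟩)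
    exact ⟨y, hyW, rfl⟩
  · exact (BPAux.open_not_below F' h4' hU'o σP' hσP'c hσP's).inter
      (BPAux.open_not_above F' h4' hU'o σQ' hσQ'c hσQ's)
  · -- f x belongs
    have hπfx : F'.π (f x) = F.π x := hcomm x
    have hU'mem : F'.π (f x) ∈ U' := by rw [hπfx]; exact hsU'
    constructor
    · refine ⟨hU'mem, ?_⟩
      intro hcon
      rw [show σP' ⟨F'.π (f x), hU'mem⟩ = f p from congrArg f (hσPpin _ hπfx)] at hcon
      have hxp := (hiso x p (hpfib.symm : F.π x = F.π p)).mpr hcon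
      exact hpnex (F.fle_antisymm _ _ hpx' hxp)
    · refine ⟨hU'mem, ?_⟩
      intro hcon
      rw [show σQ' ⟨F'.π (f x), hU'mem⟩ = f q from congrArg f (hσQpin _ hπfx)] at hcon
      have hqx := (hiso q x (hqfib.trans rfl : F.π q = F.π x)).mpr hcon
      exact hqnex (F.fle_antisymm _ _ hqx hxq')

end
end
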